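/- arXiv:2405.08266 — 5 statements merged into one kernel-verified Lean document; each statement's English description precedes it below -/
import Mathlib

section
/- Let N be a compact normal subgroup of a locally compact Hausdorff topological group G and let f ∈ UCS(G). Then the function f^N on the quotient group G/N defined by f^N(xN) = ∫_N f(xt) dt, the integral taken with respect to the normalized Haar measure on N, is well defined and belongs to UCS(G/N). -/
open BoundedContinuousFunction Topology Filter MeasureTheory

section DoubleOrbitDefs

variable {G : Type*} [Group G] [TopologicalSpace G] [IsTopologicalGroup G]

/-- The two-sided translate `ₓf_y : z ↦ f (x * z * y)` of a bounded continuous function. -/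
noncomputable def biTranslate (x y : G) (f : G →ᵇ ℂ) : G →ᵇ ℂ :=
  f.compContinuous ⟨fun z => x * z * y, ((continuous_mul_left x).mul continuous_const)⟩

@[simp] theorem biTranslate_apply (x y : G) (f : G →ᵇ ℂ) (z : G) :
    biTranslate x y f z = f (x * z * y) := rfl

/-- The double orbit `O(f) = {ₓf_y : x, y ∈ G}`. -/
def doubleOrbit (f : G →ᵇ ℂ) : Set (G →ᵇ ℂ) := {g | ∃ x y : G, g = biTranslate x y f}

/-- The left orbit `{ₓf : x ∈ G}`. -/
def leftOrbit (f : G →ᵇ ℂ) : Set (G →ᵇ ℂ) := {g | ∃ x : G, g = biTranslate x 1 f}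

/-- A set of bounded continuous functions is relatively weakly compact if its closure in
the weak topology of `C_b(G)` is compact. -/
def RelWeaklyCompact (A : Set (G →ᵇ ℂ)) : Prop :=
  IsCompact (closure (toWeakSpace ℂ (G →ᵇ ℂ) '' A))

/-- `f` is weakly almost periodic: the left orbit is relatively weakly compact. -/
def IsWAP (f : G →ᵇ ℂ) : Prop := RelWeaklyCompact (leftOrbit f)

/-- `f` is strictly weakly almost periodic: the double orbit is relatively weakly compact. -/
def IsWS (f : G →ᵇ ℂ) : Prop := RelWeaklyCompact (doubleOrbit f)

/-- `f` is almost periodic: the double orbit is relatively norm compact. -/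
def IsAP (f : G →ᵇ ℂ) : Prop := IsCompact (closure (doubleOrbit f))

/-- `f` is strictly uniformly continuous: the double orbit is equicontinuous on `G`. -/
def IsUCS (f : G →ᵇ ℂ) : Prop :=
  Equicontinuous (fun p : G × G => fun z : G => f (p.1 * z * p.2))

/-- `f` is left uniformly continuous. -/
def IsLUC (f : G →ᵇ ℂ) : Prop :=
  ∀ ε > (0 : ℝ), ∃ U ∈ 𝓝 (1 : G), ∀ s t : G, s * t⁻¹ ∈ U → dist (f s) (f t) < ε

/-- `f` is right uniformly continuous. -/
def IsRUC (f : G →ᵇ ℂ) : Prop :=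
  ∀ ε > (0 : ℝ), ∃ U ∈ 𝓝 (1 : G), ∀ s t : G, t⁻¹ * s ∈ U → dist (f s) (f t) < ε

/-- `f` is (two-sided) uniformly continuous. -/
def IsUC (f : G →ᵇ ℂ) : Prop := IsLUC f ∧ IsRUC f

/-- A subset of `G` is invariant if it is stable under all inner automorphisms. -/
def IsInvariantSet (V : Set G) : Prop := ∀ x : G, (fun g => x * g * x⁻¹) '' V = V

/-- A mean on `WAP(G)`: a positive linear functional with `m 1 = 1`, defined (at least)
on the weakly almost periodic functions. -/
def IsMeanOnWAP (m : (G →ᵇ ℂ) → ℂ) : Prop :=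
  (∀ f g : G →ᵇ ℂ, IsWAP f → IsWAP g → m (f + g) = m f + m g) ∧
  (∀ (c : ℂ) (f : G →ᵇ ℂ), IsWAP f → m (c • f) = c * m f) ∧
  m 1 = 1 ∧
  (∀ f : G →ᵇ ℂ, IsWAP f → (∀ z : G, 0 ≤ (f z).re ∧ (f z).im = 0) →
    0 ≤ (m f).re ∧ (m f).im = 0)

/-- A left-invariant mean on `WAP(G)`. -/
def IsLeftInvariantMeanOnWAP (m : (G →ᵇ ℂ) → ℂ) : Prop :=
  IsMeanOnWAP m ∧ ∀ (x : G) (f : G →ᵇ ℂ), IsWAP f → m (biTranslate x 1 f) = m f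

end DoubleOrbitDefs

/-- `G` is an IN-group: it has a compact invariant neighborhood of the identity. -/
def IsINGroup (G : Type*) [Group G] [TopologicalSpace G] : Prop :=
  ∃ V : Set G, IsCompact V ∧ V ∈ 𝓝 (1 : G) ∧ ∀ x : G, (fun g => x * g * x⁻¹) '' V = V

/-- `G` is a SIN-group: the invariant neighborhoods of the identity form a neighborhood
basis at the identity. -/
def IsSINGroup (G : Type*) [Group G] [TopologicalSpace G] : Prop :=
  ∀ U ∈ 𝓝 (1 : G), ∃ V ∈ 𝓝 (1 : G), V ⊆ U ∧ ∀ x : G, (fun g => x * g * x⁻¹) '' V = V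

/-- The intersection of all closed invariant neighborhoods of the identity of `G`. -/
def invClosedNbhdCore (G : Type*) [Group G] [TopologicalSpace G] : Set G :=
  ⋂₀ {V : Set G | IsClosed V ∧ V ∈ 𝓝 (1 : G) ∧ ∀ x : G, (fun g => x * g * x⁻¹) '' V = V}

/-- If `N` is a compact normal subgroup of a locally compact group `G` and
`f ∈ UCS(G)`, then `f^N (xN) = ∫_N f (x t) dt` (normalized Haar measure on `N`) is a
well-defined member of `UCS(G/N)`. -/
theorem stmt1 {G : Type*} [Group G] [TopologicalSpace G] [IsTopologicalGroup G]
    [LocallyCompactSpace G] [T2Space G]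
    (N : Subgroup G) [N.Normal] (hNcpt : IsCompact (N : Set G))
    [MeasurableSpace ↥N] [BorelSpace ↥N]
    (μ : Measure ↥N) [μ.IsHaarMeasure] [IsProbabilityMeasure μ]
    (f : G →ᵇ ℂ) (hf : IsUCS f) :
    ∃ F : (G ⧸ N) →ᵇ ℂ,
      (∀ x : G, F (QuotientGroup.mk x) = ∫ t : ↥N, f (x * (t : G)) ∂μ) ∧ IsUCS F := by
    classical
  -- the function `φ x = ∫_N f (x t) dμ t`
  set φ : G → ℂ := fun x => ∫ t : ↥N, f (x * (t : G)) ∂μ with hφdef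
  have hcont_mul : ∀ x : G, Continuous fun t : ↥N => x * (t : G) :=
    fun x => (continuous_mul_left x).comp continuous_subtype_val
  have hint : ∀ x : G, Integrable (fun t : ↥N => f (x * (t : G))) μ :=
    fun x => (f.compContinuous ⟨fun t : ↥N => x * (t : G), hcont_mul x⟩).integrable μ
  -- basic estimate
  have hest : ∀ (ε : ℝ) (x y : G), 0 ≤ ε →
      (∀ t : ↥N, dist (f (x * (t : G))) (f (y * (t : G))) ≤ ε) → dist (φ x) (φ y) ≤ ε := by
    intro ε x y hε h
    rw [hφdef]
    simp only [dist_eq_norm]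
    rw [← integral_sub (hint x) (hint y)]
    have := norm_integral_le_of_norm_le_const (μ := μ)
      (f := fun t : ↥N => f (x * (t : G)) - f (y * (t : G))) (C := ε) ?_
    · simpa using this
    · filter_upwards with t
      simpa [dist_eq_norm] using h t
  -- norm bound
  have hbdd : ∀ x : G, ‖φ x‖ ≤ ‖f‖ := by
    intro x
    have := norm_integral_le_of_norm_le_const (μ := μ)
      (f := fun t : ↥N => f (x * (t : G))) (C := ‖f‖) ?_
    · simpa using this
    · filter_upwards with t using f.norm_coe_le_norm _
  -- invariance under right translation by elements of N
  have hinv : ∀ (x : G) (n : ↥N), φ (x * (n : G)) = φ x := by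
    intro x n
    have h1 : (fun t : ↥N => f (x * (n : G) * (t : G))) =
        fun t : ↥N => (fun s : ↥N => f (x * (s : G))) (n * t) := by
      funext t
      simp [mul_assoc]
    rw [hφdef]
    simp only
    rw [h1, integral_mul_left_eq_self (μ := μ) (fun s : ↥N => f (x * (s : G))) n]
  -- φ descends to the quotient
  have hresp : ∀ x y : G, (QuotientGroup.mk x : G ⧸ N) = QuotientGroup.mk y → φ x = φ y := by
    intro x y hxy
    rw [QuotientGroup.eq] at hxy
    have hy : y = x * ((⟨x⁻¹ * y, hxy⟩ : ↥N) : G) := by simp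
    rw [hy, hinv]
  set F0 : (G ⧸ N) → ℂ := fun q => Quotient.liftOn' q φ (fun a b hab =>
    hresp a b (Quotient.sound' hab)) with hF0def
  have hF0mk : ∀ x : G, F0 (QuotientGroup.mk x) = φ x := fun x => rfl
  -- continuity of φ from equicontinuity of the double orbit
  have hφcont : Continuous φ := by
    rw [continuous_iff_continuousAt]
    intro x₀
    unfold ContinuousAt
    rw [Metric.tendsto_nhds]
    intro ε hε
    have hev := (Metric.equicontinuousAt_iff_right.mp (hf x₀)) (ε / 2) (by linarith)
    filter_upwards [hev] with x hx
    have h2 : dist (φ x₀) (φ x) ≤ ε / 2 := by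
      apply hest _ _ _ (by linarith)
      intro t
      have := hx (1, (t : G))
      simp only [one_mul] at this
      exact le_of_lt this
    calc dist (φ x) (φ x₀) = dist (φ x₀) (φ x) := dist_comm _ _
      _ ≤ ε / 2 := h2
      _ < ε := by linarith
  have hF0cont : Continuous F0 := by
    exact QuotientGroup.isOpenQuotientMap_mk.isQuotientMap.continuous_iff.mpr
      (show Continuous (F0 ∘ QuotientGroup.mk) from hφcont)
  -- the bounded continuous function
  refine ⟨BoundedContinuousFunction.ofNormedAddCommGroup F0 hF0cont ‖f‖
    (fun q => QuotientGroup.induction_on q hbdd), fun x => rfl, ?_⟩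
  -- equicontinuity of the double orbit of F
  intro q₀
  obtain ⟨g₀, rfl⟩ := QuotientGroup.mk_surjective q₀
  rw [Metric.equicontinuousAt_iff_right]
  intro ε hε
  have hev := (Metric.equicontinuousAt_iff_right.mp (hf g₀)) (ε / 2) (by linarith)
  obtain ⟨S, hS, hSsub⟩ := hev.exists_mem
  have hmem : QuotientGroup.mk '' S ∈ 𝓝 (QuotientGroup.mk g₀ : G ⧸ N) :=
    QuotientGroup.isOpenQuotientMap_mk.isOpenMap.image_mem_nhds hS
  refine Filter.eventually_iff_exists_mem.mpr ⟨QuotientGroup.mk '' S, hmem, ?_⟩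
  rintro z ⟨g, hgS, rfl⟩ ⟨q1, q2⟩
  obtain ⟨a, rfl⟩ := QuotientGroup.mk_surjective q1
  obtain ⟨b, rfl⟩ := QuotientGroup.mk_surjective q2
  simp only
  have hmk : ∀ u : G, (QuotientGroup.mk a : G ⧸ N) * QuotientGroup.mk u * QuotientGroup.mk b
      = (QuotientGroup.mk (a * u * b) : G ⧸ N) := fun u => rfl
  rw [hmk g₀, hmk g]
  have hFφ : ∀ u : G,
      (BoundedContinuousFunction.ofNormedAddCommGroup F0 hF0cont ‖f‖
        (fun q => QuotientGroup.induction_on q hbdd)) (QuotientGroup.mk u) = φ u :=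
    fun u => rfl
  rw [hFφ, hFφ]
  have h2 : dist (φ (a * g₀ * b)) (φ (a * g * b)) ≤ ε / 2 := by
    apply hest _ _ _ (by linarith)
    intro t
    have := hSsub g hgS (a, b * (t : G))
    simp only [← mul_assoc] at this
    exact le_of_lt this
  linarith [h2]
end

section
/- Let G be a locally compact Hausdorff IN-group and let K be the intersection of all closed invariant neighborhoods of the identity of G; assume (as holds by a theorem of Iwasawa) that K is a compact normal subgroup of G, and let θ : G → G/K be the quotient homomorphism. Then UCS(G) = {h ∘ θ : h ∈ UCS(G/K)}. In particular, every f ∈ UCS(G) is constant on each coset of K in G. -/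
open BoundedContinuousFunction Topology Filter MeasureTheory

section Aux
variable {G : Type*} [Group G] [TopologicalSpace G] [IsTopologicalGroup G]

theorem ucs_const_on_core (f : G →ᵇ ℂ) (hf : IsUCS f) {z : G}
    (hz : z ∈ invClosedNbhdCore G) (x y : G) : f (x * z * y) = f (x * y) := by
  have key : ∀ ε > (0 : ℝ), dist (f (x * z * y)) (f (x * y)) ≤ ε := by
    intro ε hε
    set V : Set G := {w | ∀ x y : G, dist (f (x * w * y)) (f (x * y)) ≤ ε} with hVdef
    have hstep : ∀ (a : G), ∀ w ∈ V, a * w * a⁻¹ ∈ V := by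
      intro a w hw x y
      have h1 : x * (a * w * a⁻¹) * y = (x * a) * w * (a⁻¹ * y) := by group
      have h2 : x * y = (x * a) * (a⁻¹ * y) := by group
      rw [h1, h2]
      exact hw (x * a) (a⁻¹ * y)
    have hVmem : V ∈ {V : Set G | IsClosed V ∧ V ∈ 𝓝 (1 : G) ∧
        ∀ a : G, (fun g => a * g * a⁻¹) '' V = V} := by
      refine ⟨?_, ?_, ?_⟩
      · have hVeq : V = ⋂ x : G, ⋂ y : G, {w | dist (f (x * w * y)) (f (x * y)) ≤ ε} := by
          ext w; simp [hVdef, Set.mem_iInter]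
        rw [hVeq]
        refine isClosed_iInter fun x => isClosed_iInter fun y => isClosed_le ?_ continuous_const
        exact Continuous.dist
          (f.continuous.comp (((continuous_mul_left x).comp continuous_id).mul continuous_const))
          continuous_const
      · have hev := hf 1 _ (Metric.dist_mem_uniformity hε)
        filter_upwards [hev] with w hw x y
        have := hw (x, y)
        simp only [Set.mem_setOf_eq] at this
        rw [dist_comm] at this
        simpa [mul_one] using this.le
      · intro a
        apply Set.Subset.antisymm
        · rintro _ ⟨u, hu, rfl⟩
          exact hstep a u hu
        · intro w hw
          refine ⟨a⁻¹ * w * a, by simpa using hstep a⁻¹ w hw, by group⟩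
    exact hz V hVmem x y
  exact eq_of_forall_dist_le key

end Aux

/-- For an IN-group `G` with `K` the intersection of all closed invariant
neighborhoods of the identity (a compact normal subgroup), `UCS(G) = {h ∘ θ : h ∈ UCS(G/K)}`,
where `θ : G → G/K` is the quotient homomorphism; in particular every `f ∈ UCS(G)` is
constant on each coset of `K`. -/
theorem stmt2 {G : Type*} [Group G] [TopologicalSpace G] [IsTopologicalGroup G]
    [LocallyCompactSpace G] [T2Space G]
    (hIN : IsINGroup G)
    (K : Subgroup G) [K.Normal] (hK : (K : Set G) = invClosedNbhdCore G)
    (hKcpt : IsCompact (K : Set G)) :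
    ({f : G →ᵇ ℂ | IsUCS f} =
      {f : G →ᵇ ℂ | ∃ h : (G ⧸ K) →ᵇ ℂ, IsUCS h ∧ ∀ x : G, f x = h (QuotientGroup.mk x)}) ∧
    (∀ f : G →ᵇ ℂ, IsUCS f → ∀ x y : G, x⁻¹ * y ∈ K → f x = f y) := by
  
  have hconst : ∀ f : G →ᵇ ℂ, IsUCS f → ∀ x y : G, x⁻¹ * y ∈ K → f x = f y := by
    intro f hf x y hxy
    have hz : x⁻¹ * y ∈ invClosedNbhdCore G := by rw [← hK]; exact hxy
    have := ucs_const_on_core f hf hz x 1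
    simpa [mul_one, mul_inv_cancel_left] using this.symm
  refine ⟨?_, hconst⟩
  have hsur : Function.Surjective (QuotientGroup.mk : G → G ⧸ K) := QuotientGroup.mk_surjective
  ext f
  simp only [Set.mem_setOf_eq]
  constructor
  · intro hf
    have hrel : ∀ a b : G, (QuotientGroup.leftRel K).r a b → f a = f b := fun a b hab =>
      hconst f hf a b ((QuotientGroup.leftRel_apply).mp hab)
    obtain ⟨C, hC⟩ := f.map_bounded'
    refine ⟨⟨⟨Quotient.lift f hrel, f.continuous.quotient_lift hrel⟩, C, fun a b => ?_⟩,
      ?_, fun x => rfl⟩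
    · obtain ⟨a, rfl⟩ := hsur a
      obtain ⟨b, rfl⟩ := hsur b
      exact hC a b
    · intro w₀
      obtain ⟨z₀, rfl⟩ := hsur w₀
      intro U hU
      have hev := hf z₀ U hU
      rw [QuotientGroup.nhds_eq, Filter.eventually_map]
      filter_upwards [hev] with z hz q
      obtain ⟨x, hx⟩ := hsur q.1
      obtain ⟨y, hy⟩ := hsur q.2
      rw [← hx, ← hy]
      have e1 : ((x : G ⧸ K) * (z₀ : G ⧸ K) * (y : G ⧸ K)) = ((x * z₀ * y : G) : G ⧸ K) := by
        simp [QuotientGroup.mk_mul]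
      have e2 : ((x : G ⧸ K) * (z : G ⧸ K) * (y : G ⧸ K)) = ((x * z * y : G) : G ⧸ K) := by
        simp [QuotientGroup.mk_mul]
      rw [e1, e2]
      exact hz (x, y)
  · rintro ⟨h, hh, hfh⟩
    intro z₀ U hU
    have hev := hh ((z₀ : G ⧸ K)) U hU
    rw [QuotientGroup.nhds_eq, Filter.eventually_map] at hev
    filter_upwards [hev] with z hz p
    have := hz ((p.1 : G ⧸ K), (p.2 : G ⧸ K))
    simp only at this
    rw [hfh (p.1 * z₀ * p.2), hfh (p.1 * z * p.2)]
    simpa [QuotientGroup.mk_mul] using this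
end

section
/- Let G be a locally compact Hausdorff IN-group, let K be the intersection of all closed invariant neighborhoods of the identity of G, assume (as holds by a theorem of Iwasawa) that K is a compact normal subgroup of G, and let θ : G → G/K be the quotient homomorphism. Then WS(G) = {h ∘ θ : h ∈ WS(G/K)}. -/
open BoundedContinuousFunction Topology Filter MeasureTheory

section NamiokaAux
open Set

set_option linter.unusedSectionVars false
set_option maxHeartbeats 1000000

variable {X K : Type*} [TopologicalSpace X] [TopologicalSpace K]

/-- There exist a "low" point and a "high" point in `U` witnessed at some `k ∈ C`. -/
def NBad (F : X → K → ℝ) (U : Set X) (C : Set K) (A B : ℝ) : Prop :=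
  ∃ x ∈ U, ∃ x' ∈ U, ∃ k ∈ C, F x k ≤ A ∧ B ≤ F x' k

/-- Every nonempty open subset of `V` has a bad pair witnessed in `C`. -/
def NInv (F : X → K → ℝ) (V : Set X) (C : Set K) (A B : ℝ) : Prop :=
  ∀ U : Set X, IsOpen U → U.Nonempty → U ⊆ V → NBad F U C A B

theorem NBad.mono {F : X → K → ℝ} {U U' : Set X} {C C' : Set K} {A B : ℝ}
    (h : NBad F U C A B) (hU : U ⊆ U') (hC : C ⊆ C') : NBad F U' C' A B := by
  obtain ⟨x, hx, x', hx', k, hk, h1, h2⟩ := h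
  exact ⟨x, hU hx, x', hU hx', k, hC hk, h1, h2⟩

theorem NInv.anti {F : X → K → ℝ} {V V' : Set X} {C : Set K} {A B : ℝ}
    (h : NInv F V C A B) (hV : V' ⊆ V) : NInv F V' C A B :=
  fun U hUo hUne hUV => h U hUo hUne (hUV.trans hV)

theorem NInv.split {F : X → K → ℝ} {V : Set X} {C C₁ C₂ : Set K} {A B : ℝ}
    (hVo : IsOpen V) (hVne : V.Nonempty)
    (hInv : NInv F V C A B) (hcov : C ⊆ C₁ ∪ C₂) :
    ∃ U : Set X, IsOpen U ∧ U.Nonempty ∧ U ⊆ V ∧ (NInv F U C₁ A B ∨ NInv F U C₂ A B) := by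
  by_cases h1 : NInv F V C₁ A B
  · exact ⟨V, hVo, hVne, subset_rfl, Or.inl h1⟩
  · rw [NInv] at h1
    push_neg at h1
    obtain ⟨U₁, hU₁o, hU₁ne, hU₁V, hnb⟩ := h1
    refine ⟨U₁, hU₁o, hU₁ne, hU₁V, Or.inr ?_⟩
    intro W hWo hWne hWU
    obtain ⟨x, hx, x', hx', k, hk, h2, h3⟩ := hInv W hWo hWne (hWU.trans hU₁V)
    rcases hcov hk with hk1 | hk2
    · exact absurd (NBad.mono (F := F) (A := A) (B := B)
        ⟨x, hx, x', hx', k, hk1, h2, h3⟩ hWU subset_rfl) hnb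
    · exact ⟨x, hx, x', hx', k, hk2, h2, h3⟩

/-- Pigeonhole the values on a grid: from the everywhere-`ε`-oscillation hypothesis, find an
open set on which a fixed pair of levels `A < B`, `B - A = ε/2`, witnesses badness hereditarily. -/
theorem exists_NInv (F : X → K → ℝ) (M : ℝ) (hbd : ∀ x k, |F x k| ≤ M) {ε : ℝ} (hε : 0 < ε)
    {V₀ : Set X} (hV₀o : IsOpen V₀) (hV₀ne : V₀.Nonempty)
    (hbad : ∀ U : Set X, IsOpen U → U.Nonempty → U ⊆ V₀ →
      ∃ x ∈ U, ∃ x' ∈ U, ∃ k, ε < |F x k - F x' k|) :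
    ∃ (V : Set X) (A B : ℝ), IsOpen V ∧ V.Nonempty ∧ V ⊆ V₀ ∧ B - A = ε/2 ∧
      NInv F V univ A B := by
  classical
  set N : ℤ := ⌈4 * M / ε⌉ with hN
  set I : Finset ℤ := Finset.Icc (-N) N with hI
  have hε4 : (0:ℝ) < ε/4 := by linarith
  -- any ε-bad pair gives a grid pair
  have key : ∀ U : Set X, IsOpen U → U.Nonempty → U ⊆ V₀ →
      ∃ i ∈ I, NBad F U univ (i * (ε/4)) (i * (ε/4) + ε/2) := by
    intro U hUo hUne hUV
    obtain ⟨x, hx, x', hx', k, hk⟩ := hbad U hUo hUne hUV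
    obtain ⟨xl, hxl, xh, hxh, hlh⟩ : ∃ xl ∈ U, ∃ xh ∈ U, F xl k + ε < F xh k := by
      rcases lt_abs.1 hk with h | h
      · exact ⟨x', hx', x, hx, by linarith⟩
      · exact ⟨x, hx, x', hx', by linarith⟩
    set i : ℤ := ⌈F xl k / (ε/4)⌉ with hi
    have h1 : F xl k / (ε/4) ≤ (i:ℝ) := Int.le_ceil _
    have h2 : (i:ℝ) < F xl k / (ε/4) + 1 := Int.ceil_lt_add_one _
    have hA1 : F xl k ≤ (i:ℝ) * (ε/4) := by
      rw [div_le_iff₀ hε4] at h1; linarith [h1]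
    have hA2 : (i:ℝ) * (ε/4) < F xl k + ε/4 := by
      have := (lt_div_iff₀ hε4).1 (by linarith : (i:ℝ) - 1 < F xl k / (ε/4))
      nlinarith
    refine ⟨i, ?_, xl, hxl, xh, hxh, k, mem_univ k, hA1, by linarith⟩
    rw [hI, Finset.mem_Icc]
    constructor
    · have hlow : -(4*M/ε) ≤ F xl k / (ε/4) := by
        have h := (abs_le.1 (hbd xl k)).1
        have heq : (-(4*M/ε) : ℝ) = (-M)/(ε/4) := by ring
        rw [heq]
        gcongr
      have : (-(N:ℝ)) ≤ (i:ℝ) := by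
        have hNN : (4*M/ε : ℝ) ≤ (N:ℝ) := Int.le_ceil _
        linarith [h1, hlow, hNN]
      exact_mod_cast this
    · have hup : F xl k / (ε/4) ≤ 4*M/ε := by
        have h := (abs_le.1 (hbd xl k)).2
        have heq : ((4*M/ε) : ℝ) = M/(ε/4) := by ring
        rw [heq]
        gcongr
      exact Int.ceil_le_ceil (by exact_mod_cast hup)
  -- finite refinement over the grid
  have main : ∀ S : Finset ℤ,
      (∃ (V : Set X) (A B : ℝ), IsOpen V ∧ V.Nonempty ∧ V ⊆ V₀ ∧ B - A = ε/2 ∧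
        NInv F V univ A B) ∨
      (∃ W : Set X, IsOpen W ∧ W.Nonempty ∧ W ⊆ V₀ ∧
        ∀ i ∈ S, ¬ NBad F W univ (i * (ε/4)) (i * (ε/4) + ε/2)) := by
    intro S
    induction S using Finset.induction_on with
    | empty => exact Or.inr ⟨V₀, hV₀o, hV₀ne, subset_rfl, by simp⟩
    | @insert a S haS ih =>
      rcases ih with h | ⟨W, hWo, hWne, hWV, hW⟩
      · exact Or.inl h
      · by_cases hinv : NInv F W univ (a*(ε/4)) (a*(ε/4)+ε/2)
        · exact Or.inl ⟨W, a*(ε/4), a*(ε/4)+ε/2, hWo, hWne, hWV, by ring, hinv⟩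
        · rw [NInv] at hinv; push_neg at hinv
          obtain ⟨U₁, hU₁o, hU₁ne, hU₁W, hnb⟩ := hinv
          refine Or.inr ⟨U₁, hU₁o, hU₁ne, hU₁W.trans hWV, ?_⟩
          intro i hiS
          rcases Finset.mem_insert.1 hiS with rfl | hiS
          · exact hnb
          · exact fun hb => hW i hiS (hb.mono hU₁W subset_rfl)
  rcases main I with h | ⟨W, hWo, hWne, hWV, hW⟩
  · exact h
  · obtain ⟨i, hiI, hbadW⟩ := key W hWo hWne hWV
    exact absurd hbadW (hW i hiI)


/-- cluster point of a sequence lies in any closed set eventually containing the sequence -/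
theorem mem_of_clusterPt_tail {Y : Type*} [TopologicalSpace Y] {u : ℕ → Y} {y : Y}
    (hy : ClusterPt y (map u atTop)) {C : Set Y} (hC : IsClosed C) {i₀ : ℕ}
    (h : ∀ i, i₀ ≤ i → u i ∈ C) : y ∈ C := by
  have hmem : C ∈ map u atTop := mem_map.2 (eventually_atTop.2 ⟨i₀, h⟩)
  have := hy.mono (le_principal_iff.2 hmem)
  rw [← mem_closure_iff_clusterPt] at this
  rwa [hC.closure_eq] at this

/-- The symmetric "two sequences" contradiction. -/
theorem cross_contradiction [CompactSpace X] [CompactSpace K]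
    (F : X → K → ℝ) (hc1 : ∀ x : X, Continuous (F x))
    (hc2 : ∀ k : K, Continuous fun x => F x k)
    (xs : ℕ → X) (κs : ℕ → K) (S : Set ℕ) (hS : S.Infinite)
    {a b : ℝ} (hab : a < b)
    (H1 : ∀ n ∈ S, ∀ m, n ≤ m → F (xs n) (κs m) ≤ a)
    (H2 : ∀ n ∈ S, ∀ m, n < m → b ≤ F (xs m) (κs n)) : False := by
  classical
  set e : ℕ → ℕ := Nat.nth (· ∈ S) with he
  have heS : ∀ i, e i ∈ S := fun i => Nat.nth_mem_of_infinite hS i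
  have hemono : StrictMono e := Nat.nth_strictMono hS
  have hei : ∀ i, i ≤ e i := fun i => (hemono.le_apply)
  -- cluster point of xs ∘ e
  obtain ⟨xst, -, hx⟩ := isCompact_univ.exists_clusterPt
    (f := map (fun i => xs (e i)) atTop) (le_principal_iff.2 univ_mem)
  obtain ⟨kst, -, hk⟩ := isCompact_univ.exists_clusterPt
    (f := map (fun i => κs (e i)) atTop) (le_principal_iff.2 univ_mem)
  -- (1) : ∀ n ∈ S, b ≤ F xst (κs n)
  have h1 : ∀ n ∈ S, b ≤ F xst (κs n) := by
    intro n hn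
    refine mem_of_clusterPt_tail hx (C := {x | b ≤ F x (κs n)})
      (isClosed_le continuous_const (hc2 (κs n))) (i₀ := n + 1) ?_
    intro i hi
    exact H2 n hn (e i) (lt_of_lt_of_le (Nat.lt_succ_of_le (le_refl n)) (hi.trans (hei i)))
  -- (2) : ∀ n ∈ S, F (xs n) kst ≤ a
  have h2 : ∀ n ∈ S, F (xs n) kst ≤ a := by
    intro n hn
    refine mem_of_clusterPt_tail hk (C := {k | F (xs n) k ≤ a})
      (isClosed_le (hc1 (xs n)) continuous_const) (i₀ := n) ?_
    intro i hi
    exact H1 n hn (e i) (hi.trans (hei i))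
  -- (3) : b ≤ F xst kst
  have h3 : b ≤ F xst kst := by
    refine mem_of_clusterPt_tail hk (C := {k | b ≤ F xst k})
      (isClosed_le continuous_const (hc1 xst)) (i₀ := 0) ?_
    intro i _
    exact h1 (e i) (heS i)
  -- (4) : F xst kst ≤ a
  have h4 : F xst kst ≤ a := by
    refine mem_of_clusterPt_tail hx (C := {x | F x kst ≤ a})
      (isClosed_le (hc2 kst) continuous_const) (i₀ := 0) ?_
    intro i _
    exact h2 (e i) (heS i)
  linarith


/-- The state of the inductive construction. -/
structure NStage (F : X → K → ℝ) (A B : ℝ) where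
  V : Set X
  C : Set K
  hVo : IsOpen V
  hVne : V.Nonempty
  hCc : IsClosed C
  hInv : NInv F V C A B

theorem nstage_step (F : X → K → ℝ) (A B σ : ℝ) (hσ : 0 < σ)
    (hc1 : ∀ x : X, Continuous (F x)) (hc2 : ∀ k : K, Continuous fun x => F x k)
    (s : NStage F A B) :
    ∃ (t : NStage F A B) (x : X) (κ : K) (b : Bool),
      t.V ⊆ s.V ∧ t.C ⊆ s.C ∧ x ∈ s.V ∧ κ ∈ t.C ∧
      (b = true → (∀ k ∈ t.C, F x k ≤ A + 2*σ) ∧ (∀ x' ∈ t.V, B - σ ≤ F x' κ)) ∧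
      (b = false → (∀ k ∈ t.C, A + σ ≤ F x k) ∧ (∀ x' ∈ t.V, F x' κ ≤ A + σ/2)) := by
  classical
  obtain ⟨x, hx, x', hx', k, hk, hlo, hhi⟩ := s.hInv s.V s.hVo s.hVne subset_rfl
  set C₁ : Set K := s.C ∩ {k | F x k ≤ A + 2*σ} with hC₁
  set C₂ : Set K := s.C ∩ {k | A + σ ≤ F x k} with hC₂
  have hcov : s.C ⊆ C₁ ∪ C₂ := by
    intro k' hk'
    rcases le_or_gt (F x k') (A + 2*σ) with h | h
    · exact Or.inl ⟨hk', h⟩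
    · exact Or.inr ⟨hk', show A + σ ≤ F x k' by linarith⟩
  obtain ⟨U, hUo, hUne, hUV, hsplit⟩ := s.hInv.split s.hVo s.hVne hcov
  rcases hsplit with hinv | hinv
  · -- branch true
    obtain ⟨y, hy, y', hy', κ, hκ, hylo, hyhi⟩ := hinv U hUo hUne subset_rfl
    set V' : Set X := U ∩ {z | B - σ < F z κ} with hV'
    have hV'o : IsOpen V' := hUo.inter (isOpen_lt continuous_const (hc2 κ))
    have hV'ne : V'.Nonempty := ⟨y', hy', by simpa using by linarith [hyhi]⟩
    refine ⟨⟨V', C₁, hV'o, hV'ne, s.hCc.inter (isClosed_le (hc1 x) continuous_const), 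
      hinv.anti inter_subset_left⟩, x, κ, true, ?_, ?_, hx, hκ, ?_, ?_⟩
    · exact inter_subset_left.trans hUV
    · exact inter_subset_left
    · intro _
      exact ⟨fun k' hk' => hk'.2, fun z hz => (hz.2 : B - σ < F z κ).le⟩
    · intro h; simp at h
  · -- branch false
    obtain ⟨y, hy, y', hy', κ, hκ, hylo, hyhi⟩ := hinv U hUo hUne subset_rfl
    set V' : Set X := U ∩ {z | F z κ < A + σ/2} with hV'
    have hV'o : IsOpen V' := hUo.inter (isOpen_lt (hc2 κ) continuous_const)
    have hV'ne : V'.Nonempty := ⟨y, hy, by simpa using by linarith [hylo]⟩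
    refine ⟨⟨V', C₂, hV'o, hV'ne, s.hCc.inter (isClosed_le continuous_const (hc1 x)), 
      hinv.anti inter_subset_left⟩, x, κ, false, ?_, ?_, hx, hκ, ?_, ?_⟩
    · exact inter_subset_left.trans hUV
    · exact inter_subset_left
    · intro h; simp at h
    · intro _
      exact ⟨fun k' hk' => hk'.2, fun z hz => (hz.2 : F z κ < A + σ/2).le⟩


/-- **Namioka-type oscillation theorem**: a bounded separately continuous function on a
product of two compact spaces has, inside every nonempty open set of the first factor, a
nonempty open subset on which it is `ε`-constant in the first variable, uniformly in the
second variable. -/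
theorem namioka_osc [CompactSpace X] [CompactSpace K]
    (F : X → K → ℝ) (hc1 : ∀ x : X, Continuous (F x))
    (hc2 : ∀ k : K, Continuous fun x => F x k)
    (M : ℝ) (hbd : ∀ x k, |F x k| ≤ M) {ε : ℝ} (hε : 0 < ε)
    {V₀ : Set X} (hV₀o : IsOpen V₀) (hV₀ne : V₀.Nonempty) :
    ∃ U : Set X, IsOpen U ∧ U.Nonempty ∧ U ⊆ V₀ ∧
      ∀ x ∈ U, ∀ x' ∈ U, ∀ k, |F x k - F x' k| ≤ ε := by
  classical
  by_contra hcon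
  push_neg at hcon
  have hbad : ∀ U : Set X, IsOpen U → U.Nonempty → U ⊆ V₀ →
      ∃ x ∈ U, ∃ x' ∈ U, ∃ k, ε < |F x k - F x' k| := by
    intro U hUo hUne hUV
    exact hcon U hUo hUne hUV
  obtain ⟨V₁, A, B, hV₁o, hV₁ne, hV₁V₀, hBA, hInv⟩ := exists_NInv F M hbd hε hV₀o hV₀ne hbad
  set σ : ℝ := ε/8 with hσdef
  have hσ : 0 < σ := by rw [hσdef]; linarith
  have hstep := nstage_step F A B σ hσ hc1 hc2
  choose t xf κf bf hVsub hCsub hxmem hκmem htrue hfalse using hstep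
  let chain : ℕ → NStage F A B := fun n => Nat.rec ⟨V₁, univ, hV₁o, hV₁ne, isClosed_univ, hInv⟩
    (fun _ st => t st) n
  have hchain : ∀ n, chain (n+1) = t (chain n) := fun _ => rfl
  set xs : ℕ → X := fun n => xf (chain n) with hxs
  set κs : ℕ → K := fun n => κf (chain n) with hκs
  set bs : ℕ → Bool := fun n => bf (chain n) with hbs
  have Vmono : ∀ m n, m ≤ n → (chain n).V ⊆ (chain m).V := by
    intro m n h
    induction n, h using Nat.le_induction with
    | base => exact subset_rfl
    | succ n hmn ih => exact (hchain n ▸ hVsub (chain n)).trans ih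
  have Cmono : ∀ m n, m ≤ n → (chain n).C ⊆ (chain m).C := by
    intro m n h
    induction n, h using Nat.le_induction with
    | base => exact subset_rfl
    | succ n hmn ih => exact (hchain n ▸ hCsub (chain n)).trans ih
  have hxmem' : ∀ n, xs n ∈ (chain n).V := fun n => hxmem (chain n)
  have hκmem' : ∀ n, κs n ∈ (chain (n+1)).C := fun n => hchain n ▸ hκmem (chain n)
  have hinf : {n | bs n = true}.Infinite ∨ {n | bs n = false}.Infinite := by
    by_contra hcc
    push_neg at hcc
    have : (univ : Set ℕ).Finite := by
      refine (hcc.1.union hcc.2).subset ?_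
      intro n _
      rcases Bool.eq_false_or_eq_true (bs n) with h | h
      · exact Or.inl h
      · exact Or.inr h
    exact Set.infinite_univ this
  rcases hinf with hS | hS
  · refine cross_contradiction F hc1 hc2 xs κs _ hS
      (a := A + 2*σ) (b := B - σ) (show A + 2*σ < B - σ by rw [hσdef]; linarith) ?_ ?_
    · intro n hn m hnm
      have hmem : κs m ∈ (chain (n+1)).C :=
        Cmono (n+1) (m+1) (by omega) (hκmem' m)
      exact (htrue (chain n) hn).1 (κs m) (hchain n ▸ hmem)
    · intro n hn m hnm
      have hmem : xs m ∈ (chain (n+1)).V := Vmono (n+1) m (by omega) (hxmem' m)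
      exact (htrue (chain n) hn).2 (xs m) (hchain n ▸ hmem)
  · refine cross_contradiction (fun x k => - F x k) (fun x => (hc1 x).neg)
      (fun k => (hc2 k).neg) xs κs _ hS
      (a := -(A + σ)) (b := -(A + σ/2)) (show -(A+σ) < -(A+σ/2) by rw [hσdef]; linarith) ?_ ?_
    · intro n hn m hnm
      have hmem : κs m ∈ (chain (n+1)).C :=
        Cmono (n+1) (m+1) (by omega) (hκmem' m)
      have h5 : A + σ ≤ F (xs n) (κs m) := (hfalse (chain n) hn).1 (κs m) (hchain n ▸ hmem)
      show -F (xs n) (κs m) ≤ -(A + σ)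
      linarith
    · intro n hn m hnm
      have hmem : xs m ∈ (chain (n+1)).V := Vmono (n+1) m (by omega) (hxmem' m)
      have h5 : F (xs m) (κs n) ≤ A + σ/2 := (hfalse (chain n) hn).2 (xs m) (hchain n ▸ hmem)
      show -(A + σ/2) ≤ -F (xs m) (κs n)
      linarith



/-- Complex-valued version of the Namioka oscillation theorem. -/
theorem namioka_osc_complex [CompactSpace X] [CompactSpace K]
    (F : X → K → ℂ) (hc1 : ∀ x : X, Continuous (F x))
    (hc2 : ∀ k : K, Continuous fun x => F x k)
    (M : ℝ) (hbd : ∀ x k, norm (F x k) ≤ M) {ε : ℝ} (hε : 0 < ε) [Nonempty X] :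
    ∃ U : Set X, IsOpen U ∧ U.Nonempty ∧
      ∀ x ∈ U, ∀ x' ∈ U, ∀ k, norm (F x k - F x' k) ≤ ε := by
  obtain ⟨U₁, hU₁o, hU₁ne, -, h₁⟩ := namioka_osc (fun x k => (F x k).re)
    (fun x => Complex.continuous_re.comp (hc1 x))
    (fun k => Complex.continuous_re.comp (hc2 k))
    M (fun x k => (Complex.abs_re_le_norm _).trans (hbd x k)) (half_pos hε)
    isOpen_univ univ_nonempty
  obtain ⟨U, hUo, hUne, hUsub, h₂⟩ := namioka_osc (fun x k => (F x k).im)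
    (fun x => Complex.continuous_im.comp (hc1 x))
    (fun k => Complex.continuous_im.comp (hc2 k))
    M (fun x k => (Complex.abs_im_le_norm _).trans (hbd x k)) (half_pos hε)
    hU₁o hU₁ne
  refine ⟨U, hUo, hUne, fun x hx x' hx' k => ?_⟩
  calc norm (F x k - F x' k) ≤ |(F x k - F x' k).re| + |(F x k - F x' k).im| :=
        Complex.norm_le_abs_re_add_abs_im _
    _ ≤ ε/2 + ε/2 := by
        rw [Complex.sub_re, Complex.sub_im]
        exact add_le_add (h₁ x (hUsub hx) x' (hUsub hx') k) (h₂ x hx x' hx' k)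
    _ = ε := by ring


end NamiokaAux

section Application
open Set

section StepA

variable {G : Type*} [Group G] [TopologicalSpace G] [IsTopologicalGroup G]

/-- The evaluation functional at a point, as an element of the weak-* dual. -/
noncomputable def evalWD (g : G) : WeakDual ℂ (G →ᵇ ℂ) :=
  StrongDual.toWeakDual (evalCLM ℂ g)

theorem evalWD_apply (g : G) (u : G →ᵇ ℂ) : evalWD g u = u g := rfl

theorem continuous_evalWD : Continuous (evalWD : G → WeakDual ℂ (G →ᵇ ℂ)) := by
  apply WeakDual.continuous_of_continuous_eval
  intro u
  exact u.continuous

/-- Main Step A: for a strictly weakly almost periodic `f`, the set of `g` moving `f`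
uniformly by at most `ε` under all two-sided translates is a neighborhood of `1`. -/
theorem isWS_translation_nbhd (f : G →ᵇ ℂ) (hf : IsWS f) {ε : ℝ} (hε : 0 < ε) :
    {g : G | ∀ u b : G, norm (f (u*g*b) - f (u*b)) ≤ ε} ∈ 𝓝 (1:G) := by
  classical
  set Qset : Set (WeakSpace ℂ (G →ᵇ ℂ)) :=
    closure (toWeakSpace ℂ (G →ᵇ ℂ) '' doubleOrbit f) with hQdef
  have hQcpt : IsCompact Qset := hf
  -- pointwise bound on elements of Qset
  have hQbd : ∀ w ∈ Qset, ∀ g : G,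
      norm (((toWeakSpace ℂ (G →ᵇ ℂ)).symm w : G →ᵇ ℂ) g) ≤ ‖f‖ := by
    intro w hw g
    have hcont : Continuous fun w : WeakSpace ℂ (G →ᵇ ℂ) =>
        (((toWeakSpace ℂ (G →ᵇ ℂ)).symm w : G →ᵇ ℂ) g) :=
      WeakBilin.eval_continuous _ (evalCLM ℂ g)
    have hcl : IsClosed {w : WeakSpace ℂ (G →ᵇ ℂ) |
        norm (((toWeakSpace ℂ (G →ᵇ ℂ)).symm w : G →ᵇ ℂ) g) ≤ ‖f‖} :=
      isClosed_le (continuous_norm.comp hcont) continuous_const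
    refine closure_minimal ?_ hcl hw
    rintro w ⟨u, ⟨x, y, rfl⟩, rfl⟩
    show norm ((biTranslate x y f) g) ≤ ‖f‖
    rw [biTranslate_apply]
    exact f.norm_coe_le_norm _
  -- the compact set of functionals
  set Xset : Set (WeakDual ℂ (G →ᵇ ℂ)) := closure (Set.range (evalWD : G → _)) with hXdef
  have hXball : Xset ⊆ WeakDual.toStrongDual ⁻¹' Metric.closedBall 0 1 := by
    have hcl : IsClosed (WeakDual.toStrongDual ⁻¹'
        Metric.closedBall (0 : StrongDual ℂ (G →ᵇ ℂ)) 1) :=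
      (WeakDual.isCompact_closedBall (0 : StrongDual ℂ (G →ᵇ ℂ)) 1).isClosed
    refine closure_minimal ?_ hcl
    rintro φ ⟨g, rfl⟩
    simp only [Set.mem_preimage, Metric.mem_closedBall, dist_zero_right]
    refine ContinuousLinearMap.opNorm_le_bound _ zero_le_one (fun u => ?_)
    simpa [evalWD_apply] using u.norm_coe_le_norm g
  have hXcpt : IsCompact Xset :=
    (WeakDual.isCompact_closedBall (0 : StrongDual ℂ (G →ᵇ ℂ)) 1).of_isClosed_subset
      isClosed_closure hXball
  haveI : CompactSpace ↥Xset := isCompact_iff_compactSpace.mp hXcpt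
  haveI : CompactSpace ↥Qset := isCompact_iff_compactSpace.mp hQcpt
  haveI : Nonempty ↥Xset := ⟨⟨evalWD 1, subset_closure ⟨1, rfl⟩⟩⟩
  -- apply Namioka
  set F : ↥Xset → ↥Qset → ℂ := fun φ w => (φ : WeakDual ℂ (G →ᵇ ℂ))
    (((toWeakSpace ℂ (G →ᵇ ℂ)).symm (w : WeakSpace ℂ (G →ᵇ ℂ)) : G →ᵇ ℂ)) with hFdef
  have hc1 : ∀ φ : ↥Xset, Continuous (F φ) := by
    intro φ
    have : Continuous fun w : WeakSpace ℂ (G →ᵇ ℂ) =>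
        (φ : WeakDual ℂ (G →ᵇ ℂ)) ((toWeakSpace ℂ (G →ᵇ ℂ)).symm w : G →ᵇ ℂ) :=
      WeakBilin.eval_continuous _ (WeakDual.toStrongDual (φ : WeakDual ℂ (G →ᵇ ℂ)))
    exact this.comp continuous_subtype_val
  have hc2 : ∀ w : ↥Qset, Continuous fun φ : ↥Xset => F φ w := by
    intro w
    exact (WeakDual.eval_continuous _).comp continuous_subtype_val
  have hbd : ∀ (φ : ↥Xset) (w : ↥Qset), norm (F φ w) ≤ ‖f‖ := by
    intro φ w
    have hφ : ‖WeakDual.toStrongDual (φ : WeakDual ℂ (G →ᵇ ℂ))‖ ≤ 1 := by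
      have := hXball φ.2
      simpa [dist_zero_right] using this
    have hw : ‖((toWeakSpace ℂ (G →ᵇ ℂ)).symm (w : WeakSpace ℂ (G →ᵇ ℂ)) : G →ᵇ ℂ)‖ ≤ ‖f‖ := by
      refine (norm_le (norm_nonneg f)).mpr (fun g => ?_)
      exact hQbd w w.2 g
    calc ‖F φ w‖ ≤ ‖WeakDual.toStrongDual (φ : WeakDual ℂ (G →ᵇ ℂ))‖ *
          ‖((toWeakSpace ℂ (G →ᵇ ℂ)).symm (w : WeakSpace ℂ (G →ᵇ ℂ)) : G →ᵇ ℂ)‖ :=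
        ContinuousLinearMap.le_opNorm _ _
      _ ≤ 1 * ‖f‖ := by
          exact mul_le_mul hφ hw (norm_nonneg _) zero_le_one
      _ = ‖f‖ := one_mul _
  obtain ⟨U, hUo, hUne, hosc⟩ := namioka_osc_complex F hc1 hc2 ‖f‖ hbd hε
  -- extract an open set of G
  obtain ⟨W, hWo, hWeq⟩ := isOpen_induced_iff.mp hUo
  obtain ⟨φ₀, hφ₀U⟩ := hUne
  have hφ₀W : (φ₀ : WeakDual ℂ (G →ᵇ ℂ)) ∈ W := by
    rw [← hWeq] at hφ₀U; exact hφ₀U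
  -- density of evaluations in Xset
  obtain ⟨ψ, hψW, g₀, hg₀⟩ : ∃ ψ ∈ W, ∃ g₀ : G, evalWD g₀ = ψ := by
    have hmem : (φ₀ : WeakDual ℂ (G →ᵇ ℂ)) ∈ closure (Set.range (evalWD : G → _)) := φ₀.2
    rw [mem_closure_iff] at hmem
    obtain ⟨ψ, hψ1, hψ2⟩ := hmem W hWo hφ₀W
    exact ⟨ψ, hψ1, hψ2⟩
  -- the open set of G
  set 𝒰 : Set G := evalWD ⁻¹' W with h𝒰def
  have h𝒰o : IsOpen 𝒰 := hWo.preimage continuous_evalWD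
  have hg₀𝒰 : g₀ ∈ 𝒰 := by rw [h𝒰def, Set.mem_preimage, hg₀]; exact hψW
  -- small oscillation over 𝒰
  have hosc' : ∀ g ∈ 𝒰, ∀ g' ∈ 𝒰, ∀ w ∈ Qset,
      norm (((toWeakSpace ℂ (G →ᵇ ℂ)).symm w : G →ᵇ ℂ) g -
        ((toWeakSpace ℂ (G →ᵇ ℂ)).symm w : G →ᵇ ℂ) g') ≤ ε := by
    intro g hg g' hg' w hw
    have hgX : evalWD g ∈ Xset := subset_closure ⟨g, rfl⟩
    have hg'X : evalWD g' ∈ Xset := subset_closure ⟨g', rfl⟩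
    have h1 : (⟨evalWD g, hgX⟩ : ↥Xset) ∈ U := by rw [← hWeq]; exact hg
    have h2 : (⟨evalWD g', hg'X⟩ : ↥Xset) ∈ U := by rw [← hWeq]; exact hg'
    exact hosc _ h1 _ h2 ⟨w, hw⟩
  -- conclude
  have hsub : {s : G | g₀ * s ∈ 𝒰} ⊆
      {g : G | ∀ u b : G, norm (f (u*g*b) - f (u*b)) ≤ ε} := by
    intro s hs u b
    have hOrb : toWeakSpace ℂ (G →ᵇ ℂ) (biTranslate (u * g₀⁻¹) b f) ∈ Qset :=
      subset_closure ⟨biTranslate (u * g₀⁻¹) b f, ⟨u * g₀⁻¹, b, rfl⟩, rfl⟩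
    have := hosc' (g₀ * s) hs g₀ hg₀𝒰 _ hOrb
    have hsymm : ((toWeakSpace ℂ (G →ᵇ ℂ)).symm
        (toWeakSpace ℂ (G →ᵇ ℂ) (biTranslate (u * g₀⁻¹) b f)) : G →ᵇ ℂ) =
        biTranslate (u * g₀⁻¹) b f := (toWeakSpace ℂ (G →ᵇ ℂ)).symm_apply_apply _
    rw [hsymm] at this
    simp only [biTranslate_apply] at this
    have e1 : u * g₀⁻¹ * (g₀ * s) * b = u * s * b := by group
    have e2 : u * g₀⁻¹ * g₀ * b = u * b := by group
    rwa [e1, e2] at this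
  refine Filter.mem_of_superset ?_ hsub
  have : Continuous fun s : G => g₀ * s := continuous_mul_left g₀
  have hopen : IsOpen {s : G | g₀ * s ∈ 𝒰} := h𝒰o.preimage this
  exact hopen.mem_nhds (by simpa using hg₀𝒰)

end StepA

section Glue
variable {G : Type*} [Group G] [TopologicalSpace G] [IsTopologicalGroup G]

/-- T2 for the weak topology on a normed `ℂ`-space. -/
theorem weakSpace_t2 {E : Type*} [NormedAddCommGroup E] [NormedSpace ℂ E] :
    T2Space (WeakSpace ℂ E) := by
  refine ⟨fun x y hxy => ?_⟩
  have hne : (toWeakSpace ℂ E).symm x ≠ (toWeakSpace ℂ E).symm y := by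
    intro h
    exact hxy ((toWeakSpace ℂ E).symm.injective h)
  obtain ⟨φ, hφ⟩ := SeparatingDual.exists_separating_of_ne (R := ℂ) hne
  exact separated_by_continuous (WeakBilin.eval_continuous _ φ) hφ

/-- constancy on cosets of `K`, from Step A. -/
theorem isWS_coset_const (f : G →ᵇ ℂ) (hf : IsWS f)
    (K : Subgroup G) (hK : (K : Set G) = invClosedNbhdCore G) :
    ∀ k ∈ K, ∀ u b : G, f (u * k * b) = f (u * b) := by
  intro k hk u b
  have key : ∀ ε : ℝ, 0 < ε → norm (f (u*k*b) - f (u*b)) ≤ ε := by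
    intro ε hε
    set Vε : Set G := {g : G | ∀ u b : G, norm (f (u*g*b) - f (u*b)) ≤ ε} with hVdef
    have hsub : ∀ x : G, ∀ g ∈ Vε, x * g * x⁻¹ ∈ Vε := by
      intro x g hg u' b'
      have := hg (u' * x) (x⁻¹ * b')
      have e1 : u' * x * g * (x⁻¹ * b') = u' * (x * g * x⁻¹) * b' := by group
      have e2 : u' * x * (x⁻¹ * b') = u' * b' := by group
      rwa [e1, e2] at this
    have hinv : ∀ x : G, (fun g => x * g * x⁻¹) '' Vε = Vε := by
      intro x
      apply Set.Subset.antisymm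
      · rintro _ ⟨g, hg, rfl⟩
        exact hsub x g hg
      · intro g hg
        refine ⟨x⁻¹ * g * x, ?_, by group⟩
        have := hsub x⁻¹ g hg
        simpa using this
    have hcl : IsClosed Vε := by
      have : Vε = ⋂ (u : G), ⋂ (b : G),
          {g : G | norm (f (u*g*b) - f (u*b)) ≤ ε} := by
        ext g; simp [hVdef, Set.mem_iInter]
      rw [this]
      refine isClosed_iInter fun u' => isClosed_iInter fun b' => ?_
      have hcont : Continuous fun g : G => norm (f (u'*g*b') - f (u'*b')) := by
        refine continuous_norm.comp (Continuous.sub ?_ continuous_const)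
        exact f.continuous.comp (((continuous_mul_left u').mul continuous_const))
      exact isClosed_le hcont continuous_const
    have hnbhd : Vε ∈ 𝓝 (1:G) := isWS_translation_nbhd f hf hε
    have hKsub : (K : Set G) ⊆ Vε := by
      rw [hK]
      exact Set.sInter_subset_of_mem ⟨hcl, hnbhd, hinv⟩
    exact hKsub hk u b
  by_contra hne
  have habs : 0 < norm (f (u*k*b) - f (u*b)) := by
    have := norm_pos_iff.mpr (sub_ne_zero.mpr hne)
    exact this
  have := key _ (half_pos habs)
  linarith

end Glue

section Quot

variable {G : Type*} [Group G] [TopologicalSpace G] [IsTopologicalGroup G]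
variable (K : Subgroup G) [K.Normal]

/-- Descend a bounded continuous function constant on `K`-cosets to the quotient. -/
noncomputable def bcfDescend (u : G →ᵇ ℂ) (hc : ∀ x : G, ∀ k ∈ K, u (x * k) = u x) :
    (G ⧸ K) →ᵇ ℂ where
  toContinuousMap :=
    { toFun := Quotient.lift u (by
        intro a b hab
        have hab' : a⁻¹ * b ∈ K := QuotientGroup.leftRel_apply.mp hab
        have he : a * (a⁻¹ * b) = b := by group
        rw [← he]
        exact (hc a _ hab').symm)
      continuous_toFun := u.continuous.quotient_lift _ }
  map_bounded' := by
    obtain ⟨C, hC⟩ := u.bounded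
    refine ⟨C, fun q₁ q₂ => ?_⟩
    obtain ⟨x, rfl⟩ := QuotientGroup.mk_surjective q₁
    obtain ⟨y, rfl⟩ := QuotientGroup.mk_surjective q₂
    exact hC x y

@[simp] theorem bcfDescend_apply (u : G →ᵇ ℂ) (hc) (x : G) :
    bcfDescend K u hc (QuotientGroup.mk x) = u x := rfl

theorem bcfDescend_norm_le (u : G →ᵇ ℂ) (hc) : ‖bcfDescend K u hc‖ ≤ ‖u‖ := by
  refine (norm_le (norm_nonneg u)).mpr fun q => ?_
  obtain ⟨x, rfl⟩ := QuotientGroup.mk_surjective q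
  exact u.norm_coe_le_norm x

/-- Pull back along the quotient map, as a continuous linear map. -/
noncomputable def bcfPullback : ((G ⧸ K) →ᵇ ℂ) →L[ℂ] (G →ᵇ ℂ) :=
  LinearMap.mkContinuous
    { toFun := fun h => h.compContinuous ⟨QuotientGroup.mk, continuous_quotient_mk'⟩
      map_add' := fun h₁ h₂ => by ext x; simp
      map_smul' := fun c h => by ext x; simp }
    1 (fun h => by simpa using norm_compContinuous_le h _)

@[simp] theorem bcfPullback_apply (h : (G ⧸ K) →ᵇ ℂ) (x : G) :
    bcfPullback K h x = h (QuotientGroup.mk x) := rfl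

end Quot

section Transfer
variable {G : Type*} [Group G] [TopologicalSpace G] [IsTopologicalGroup G]
variable (K : Subgroup G) [K.Normal]

theorem biTranslate_pullback (h : (G ⧸ K) →ᵇ ℂ) (x y : G) :
    biTranslate x y (bcfPullback K h) =
      bcfPullback K (biTranslate (QuotientGroup.mk x) (QuotientGroup.mk y) h) := by
  ext z
  show h (QuotientGroup.mk (x * z * y)) =
    h (QuotientGroup.mk x * QuotientGroup.mk z * QuotientGroup.mk y)
  simp [QuotientGroup.mk_mul]

theorem isWS_pullback (h : (G ⧸ K) →ᵇ ℂ) (hh : IsWS h) : IsWS (bcfPullback K h) := by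
  haveI : T2Space (WeakSpace ℂ (G →ᵇ ℂ)) := weakSpace_t2
  set T := WeakSpace.map (bcfPullback K) with hT
  have himg : toWeakSpace ℂ (G →ᵇ ℂ) '' doubleOrbit (bcfPullback K h) ⊆
      T '' (toWeakSpace ℂ ((G ⧸ K) →ᵇ ℂ) '' doubleOrbit h) := by
    rintro _ ⟨u, ⟨x, y, rfl⟩, rfl⟩
    refine ⟨toWeakSpace ℂ _ (biTranslate (QuotientGroup.mk x) (QuotientGroup.mk y) h),
      ⟨_, ⟨QuotientGroup.mk x, QuotientGroup.mk y, rfl⟩, rfl⟩, ?_⟩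
    rw [biTranslate_pullback]
    rfl
  have hcpt : IsCompact (T '' closure (toWeakSpace ℂ ((G ⧸ K) →ᵇ ℂ) '' doubleOrbit h)) :=
    hh.image T.continuous
  exact IsCompact.of_isClosed_subset hcpt isClosed_closure
    (closure_minimal (himg.trans (Set.image_mono subset_closure)) hcpt.isClosed)

theorem isWS_descend (f : G →ᵇ ℂ) (hf : IsWS f)
    (hconst : ∀ k ∈ K, ∀ u b : G, f (u * k * b) = f (u * b))
    (hc₀ : ∀ x : G, ∀ k ∈ K, f (x * k) = f x) :
    IsWS (bcfDescend K f hc₀) := by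
  classical
  haveI : T2Space (WeakSpace ℂ ((G ⧸ K) →ᵇ ℂ)) := weakSpace_t2
  set Qf : Set (WeakSpace ℂ (G →ᵇ ℂ)) :=
    closure (toWeakSpace ℂ (G →ᵇ ℂ) '' doubleOrbit f) with hQdef
  have hQcpt : IsCompact Qf := hf
  haveI : CompactSpace ↥Qf := isCompact_iff_compactSpace.mp hQcpt
  -- all elements of Qf are constant on K-cosets
  have hmem : ∀ w ∈ Qf, ∀ x : G, ∀ k ∈ K,
      ((toWeakSpace ℂ (G →ᵇ ℂ)).symm w : G →ᵇ ℂ) (x * k) =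
        ((toWeakSpace ℂ (G →ᵇ ℂ)).symm w : G →ᵇ ℂ) x := by
    intro w hw x k hk
    have hcl : IsClosed {w : WeakSpace ℂ (G →ᵇ ℂ) |
        ((toWeakSpace ℂ (G →ᵇ ℂ)).symm w : G →ᵇ ℂ) (x * k) =
          ((toWeakSpace ℂ (G →ᵇ ℂ)).symm w : G →ᵇ ℂ) x} :=
      isClosed_eq (WeakBilin.eval_continuous _ (evalCLM ℂ (x * k)))
        (WeakBilin.eval_continuous _ (evalCLM ℂ x))
    refine closure_minimal ?_ hcl hw
    rintro _ ⟨u, ⟨a, b, rfl⟩, rfl⟩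
    show (biTranslate a b f) (x * k) = (biTranslate a b f) x
    simp only [biTranslate_apply]
    have e1 : a * (x * k) * b = (a * x) * k * b := by group
    have e2 : a * x * b = (a * x) * b := by group
    rw [e1, e2]
    exact hconst k hk (a * x) b
  -- the submodule of coset-constant functions
  set Rsub : Submodule ℂ (G →ᵇ ℂ) :=
    { carrier := {u : G →ᵇ ℂ | ∀ x : G, ∀ k ∈ K, u (x * k) = u x}
      add_mem' := fun hu hv x k hk => by
        simp only [coe_add, Pi.add_apply]
        rw [hu x k hk, hv x k hk]
      zero_mem' := fun x k hk => rfl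
      smul_mem' := fun c u hu x k hk => by
        simp only [coe_smul, Pi.smul_apply]
        rw [hu x k hk] } with hRdef
  -- the descent map on the subtype, and extension of functionals
  have hψext : ∀ ψ : ((G ⧸ K) →ᵇ ℂ) →L[ℂ] ℂ, ∃ φ : (G →ᵇ ℂ) →L[ℂ] ℂ,
      ∀ (u : G →ᵇ ℂ) (hu : u ∈ Rsub), φ u = ψ (bcfDescend K u hu) := by
    intro ψ
    set DL : Rsub →ₗ[ℂ] ((G ⧸ K) →ᵇ ℂ) :=
      { toFun := fun u => bcfDescend K u.1 u.2
        map_add' := fun u v => by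
          ext q
          obtain ⟨x, rfl⟩ := QuotientGroup.mk_surjective q
          rfl
        map_smul' := fun c u => by
          ext q
          obtain ⟨x, rfl⟩ := QuotientGroup.mk_surjective q
          rfl } with hDL
    have hb : ∀ u : Rsub, ‖(ψ.toLinearMap.comp DL) u‖ ≤ ‖ψ‖ * ‖u‖ := by
      intro u
      calc ‖ψ (DL u)‖ ≤ ‖ψ‖ * ‖DL u‖ := ψ.le_opNorm _
        _ ≤ ‖ψ‖ * ‖u‖ := by
            have := bcfDescend_norm_le K u.1 u.2
            exact mul_le_mul_of_nonneg_left this (norm_nonneg ψ)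
    obtain ⟨φ, hφ, -⟩ := exists_extension_norm_eq Rsub
      (LinearMap.mkContinuous (ψ.toLinearMap.comp DL) ‖ψ‖ hb)
    exact ⟨φ, fun u hu => by
      have := hφ ⟨u, hu⟩
      rw [this]
      rfl⟩
  -- the continuous descent map from Qf
  set d : ↥Qf → ((G ⧸ K) →ᵇ ℂ) := fun w =>
    bcfDescend K ((toWeakSpace ℂ (G →ᵇ ℂ)).symm w.1 : G →ᵇ ℂ)
      (hmem w.1 w.2) with hd
  set theta : ↥Qf → WeakSpace ℂ ((G ⧸ K) →ᵇ ℂ) :=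
    fun w => toWeakSpace ℂ _ (d w) with htheta
  have hthc : Continuous theta := by
    refine WeakBilin.continuous_of_continuous_eval _ ?_
    intro ψ
    obtain ⟨φ, hφ⟩ := hψext ψ
    have heq : (fun w : ↥Qf => ψ (d w)) =
        fun w : ↥Qf => φ ((toWeakSpace ℂ (G →ᵇ ℂ)).symm w.1 : G →ᵇ ℂ) :=
      funext fun w => (hφ _ (hmem w.1 w.2)).symm
    show Continuous fun w : ↥Qf => ψ (d w)
    rw [heq]
    exact (WeakBilin.eval_continuous _ φ : Continuous fun w : WeakSpace ℂ (G →ᵇ ℂ) =>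
      φ ((toWeakSpace ℂ (G →ᵇ ℂ)).symm w : G →ᵇ ℂ)).comp continuous_subtype_val
  have hrange : IsCompact (Set.range theta) := isCompact_range hthc
  -- the double orbit downstairs is contained in the range of theta
  have horb : toWeakSpace ℂ ((G ⧸ K) →ᵇ ℂ) '' doubleOrbit (bcfDescend K f hc₀) ⊆
      Set.range theta := by
    rintro _ ⟨u, ⟨a, b, rfl⟩, rfl⟩
    obtain ⟨x, rfl⟩ := QuotientGroup.mk_surjective a
    obtain ⟨y, rfl⟩ := QuotientGroup.mk_surjective b
    refine ⟨⟨toWeakSpace ℂ _ (biTranslate x y f),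
      subset_closure ⟨_, ⟨x, y, rfl⟩, rfl⟩⟩, ?_⟩
    show toWeakSpace ℂ _ (d _) = toWeakSpace ℂ _
      (biTranslate (QuotientGroup.mk x) (QuotientGroup.mk y) (bcfDescend K f hc₀))
    apply congrArg
    ext q
    obtain ⟨z, rfl⟩ := QuotientGroup.mk_surjective q
    show ((toWeakSpace ℂ (G →ᵇ ℂ)).symm (toWeakSpace ℂ (G →ᵇ ℂ) (biTranslate x y f)) :
      G →ᵇ ℂ) z = (bcfDescend K f hc₀)
        (QuotientGroup.mk x * QuotientGroup.mk z * QuotientGroup.mk y)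
    rw [(toWeakSpace ℂ (G →ᵇ ℂ)).symm_apply_apply]
    have : QuotientGroup.mk x * QuotientGroup.mk z * QuotientGroup.mk y =
        (QuotientGroup.mk (x * z * y) : G ⧸ K) := by
      simp [QuotientGroup.mk_mul]
    rw [this]
    rfl
  exact IsCompact.of_isClosed_subset hrange isClosed_closure
    (closure_minimal horb hrange.isClosed)

end Transfer

end Application

/-- For an IN-group `G` with `K` the intersection of all closed invariant
neighborhoods of the identity (a compact normal subgroup) and `θ : G → G/K` the quotient
homomorphism, `WS(G) = {h ∘ θ : h ∈ WS(G/K)}`. -/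
theorem stmt5 {G : Type*} [Group G] [TopologicalSpace G] [IsTopologicalGroup G]
    [LocallyCompactSpace G] [T2Space G]
    (hIN : IsINGroup G)
    (K : Subgroup G) [K.Normal] (hK : (K : Set G) = invClosedNbhdCore G)
    (hKcpt : IsCompact (K : Set G)) :
    {f : G →ᵇ ℂ | IsWS f} =
      {f : G →ᵇ ℂ | ∃ h : (G ⧸ K) →ᵇ ℂ, IsWS h ∧ ∀ x : G, f x = h (QuotientGroup.mk x)} := by
  ext f
  simp only [Set.mem_setOf_eq]
  constructor
  · intro hf
    have hconst : ∀ k ∈ K, ∀ u b : G, f (u * k * b) = f (u * b) := isWS_coset_const f hf K hK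
    have hc₀ : ∀ x : G, ∀ k ∈ K, f (x * k) = f x := by
      intro x k hk
      have := hconst k hk x 1
      simpa using this
    exact ⟨bcfDescend K f hc₀, isWS_descend K f hf hconst hc₀, fun x => rfl⟩
  · rintro ⟨h, hh, hfh⟩
    have hfe : f = bcfPullback K h := by
      ext x
      rw [hfh x]
      rfl
    rw [hfe]
    exact isWS_pullback K h hh
end

section
/- If G is a noncompact locally compact Hausdorff IN-group, then AP(G) is a proper subset of WS(G); that is, there exists f ∈ C_b(G) whose double orbit O(f) is relatively weakly compact but not relatively norm compact. -/
open BoundedContinuousFunction Topology Filter MeasureTheory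

set_option linter.unusedSectionVars false
set_option maxHeartbeats 1000000

open scoped Pointwise ENNReal


section
variable {G : Type*} [Group G] [TopologicalSpace G] [IsTopologicalGroup G]

lemma my_exists_sep (K : Set G) (hK : IsCompact K)
    (Q : Set G) (hQ : ∀ C : Set G, IsCompact C → ∃ x ∈ Q, x ∉ C) (n : ℕ) :
    ∃ s : Fin n → G, (∀ i, s i ∈ Q) ∧ ∀ i j : Fin n, i < j → ∀ k ∈ K, s j ≠ k * s i := by
  induction n with
  | zero => exact ⟨fun i => i.elim0, fun i => i.elim0, fun i => i.elim0⟩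
  | succ n ih =>
    obtain ⟨s, hsQ, hsep⟩ := ih
    have hC : IsCompact (⋃ i : Fin n, (fun k => k * s i) '' K) :=
      isCompact_iUnion (fun i => hK.image (continuous_mul_right _))
    obtain ⟨x, hxQ, hx⟩ := hQ _ hC
    refine ⟨Fin.snoc s x, ?_, ?_⟩
    · intro i
      induction i using Fin.lastCases with
      | last => simpa using hxQ
      | cast j => simpa using hsQ j
    · intro i j hij k hk
      induction j using Fin.lastCases with
      | last =>
        have hi : (i : ℕ) < n := by simpa [Fin.lt_def] using hij
        have hieq : i = Fin.castSucc ⟨i, hi⟩ := by ext; simp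
        rw [hieq, Fin.snoc_castSucc, Fin.snoc_last]
        intro hEq
        exact hx (Set.mem_iUnion.2 ⟨_, ⟨k, hk, hEq.symm⟩⟩)
      | cast j =>
        have hij' : (i : ℕ) < (j : ℕ) := by simpa [Fin.lt_def] using hij
        have hi : (i : ℕ) < n := lt_of_lt_of_le hij' (by omega)
        have hieq : i = Fin.castSucc ⟨i, hi⟩ := by ext; simp
        rw [hieq, Fin.snoc_castSucc, Fin.snoc_castSucc]
        exact hsep _ _ (by simpa [Fin.lt_def] using hij') k hk

/-- symmetric version -/
lemma my_exists_sep' (K : Set G) (hK : IsCompact K) (hKsymm : ∀ k ∈ K, k⁻¹ ∈ K)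
    (Q : Set G) (hQ : ∀ C : Set G, IsCompact C → ∃ x ∈ Q, x ∉ C) (n : ℕ) :
    ∃ s : Fin n → G, (∀ i, s i ∈ Q) ∧ ∀ i j : Fin n, i ≠ j → ∀ k ∈ K, s j ≠ k * s i := by
  obtain ⟨s, hQ', hsep⟩ := my_exists_sep K hK Q hQ n
  refine ⟨s, hQ', fun i j hij k hk hEq => ?_⟩
  rcases lt_or_gt_of_ne hij with h | h
  · exact hsep i j h k hk hEq
  · exact hsep j i h k⁻¹ (hKsymm k hk) (by rw [hEq]; group)
end


section myf
variable {G : Type*} [Group G] [TopologicalSpace G] [IsTopologicalGroup G]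
  [LocallyCompactSpace G] [T2Space G] [MeasurableSpace G] [BorelSpace G]

noncomputable def myf (V : Set G) : G → ℝ :=
  fun z => ((Measure.haar : Measure G) (V ∩ (fun g => z⁻¹ * g) ⁻¹' V)).toReal

lemma myf_nonneg (V : Set G) (z : G) : 0 ≤ myf V z := ENNReal.toReal_nonneg

lemma myf_le (V : Set G) (hVc : IsCompact V) (z : G) :
    myf V z ≤ ((Measure.haar : Measure G) V).toReal :=
  ENNReal.toReal_mono hVc.measure_lt_top.ne (measure_mono Set.inter_subset_left)

lemma myf_one (V : Set G) : myf V 1 = ((Measure.haar : Measure G) V).toReal := by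
  simp [myf]

lemma myf_eq_zero (V : Set G) (z : G) (hz : z ∉ V * V⁻¹) : myf V z = 0 := by
  have : V ∩ (fun g => z⁻¹ * g) ⁻¹' V = ∅ := by
    ext g
    simp only [Set.mem_inter_iff, Set.mem_preimage, Set.mem_empty_iff_false, iff_false]
    rintro ⟨hg, hg'⟩
    exact hz ⟨g, hg, (z⁻¹ * g)⁻¹, Set.inv_mem_inv.2 hg', by group⟩
  simp [myf, this]

lemma myf_mul (V : Set G) (u w : G) :
    myf V (u * w) =
      ((Measure.haar : Measure G)
        (((fun h => u * h) ⁻¹' V) ∩ ((fun h => w⁻¹ * h) ⁻¹' V))).toReal := by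
  unfold myf
  congr 1
  rw [← measure_preimage_mul (Measure.haar : Measure G) u
    (V ∩ (fun g => (u * w)⁻¹ * g) ⁻¹' V)]
  congr 1
  ext h
  simp only [Set.mem_preimage, Set.mem_inter_iff]
  constructor
  · rintro ⟨h1, h2⟩
    refine ⟨h1, ?_⟩
    have : (u * w)⁻¹ * (u * h) = w⁻¹ * h := by group
    rwa [this] at h2
  · rintro ⟨h1, h2⟩
    refine ⟨h1, ?_⟩
    have : (u * w)⁻¹ * (u * h) = w⁻¹ * h := by group
    rwa [this]
end myf


section
variable {G : Type*} [Group G] [TopologicalSpace G] [IsTopologicalGroup G]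
  [LocallyCompactSpace G] [T2Space G] [MeasurableSpace G] [BorelSpace G]

-- small translation lemma
lemma my_small (V : Set G) (hV : IsCompact V) {ε : ℝ≥0∞} (hε : ε ≠ 0) :
    ∃ U ∈ 𝓝 (1 : G), ∀ u ∈ U, (Measure.haar : Measure G) ((fun g => u * g) ⁻¹' V \ V) ≤ ε := by
  have hVm : MeasurableSet V := hV.isClosed.measurableSet
  have hVfin : (Measure.haar : Measure G) V ≠ ∞ := hV.measure_lt_top.ne
  obtain ⟨O, hVO, hOopen, hO⟩ := V.exists_isOpen_lt_add hVfin hε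
  obtain ⟨U, hU, hUV⟩ := compact_open_separated_mul_left hV hOopen hVO
  refine ⟨(fun u => u⁻¹) ⁻¹' U, (continuous_inv.tendsto _).eventually_mem (by simpa using hU), ?_⟩
  intro u hu
  have h1 : (fun g => u * g) ⁻¹' V ⊆ O := by
    intro g hg
    have : u⁻¹ * (u * g) ∈ U * V := Set.mul_mem_mul hu hg
    simpa [mul_assoc] using hUV this
  calc (Measure.haar : Measure G) ((fun g => u * g) ⁻¹' V \ V) ≤ Measure.haar (O \ V) :=
        measure_mono (Set.diff_subset_diff_left h1)
    _ = Measure.haar O - Measure.haar V := measure_diff hVO hVm.nullMeasurableSet hVfin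
    _ ≤ ε := tsub_le_iff_right.2 (le_of_le_of_eq hO.le (add_comm _ _))
end


section conj
variable {G : Type*} [Group G] [TopologicalSpace G] [IsTopologicalGroup G]
  [LocallyCompactSpace G] [T2Space G] [MeasurableSpace G] [BorelSpace G]

lemma my_haar_pos (V : Set G) (hVn : V ∈ 𝓝 (1 : G)) : 0 < (Measure.haar : Measure G) V :=
  lt_of_lt_of_le ((isOpen_interior).measure_pos Measure.haar ⟨1, mem_interior_iff_mem_nhds.2 hVn⟩)
    (measure_mono interior_subset)

lemma my_conj_inv (V : Set G) (hVc : IsCompact V) (hVn : V ∈ 𝓝 (1 : G))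
    (hVi : ∀ x : G, (fun g => x * g * x⁻¹) '' V = V)
    (x : G) (A : Set G) (hA : MeasurableSet A) (hAc : IsCompact (closure A)) :
    (Measure.haar : Measure G) ((fun g => x * g * x⁻¹) '' A) = Measure.haar A := by
  classical
  set e : G ≃* G := MulAut.conj x⁻¹ with he
  have hecont : Continuous e := by
    have hc0 : Continuous fun h : G => x⁻¹ * h * x := by fun_prop
    simpa [he, MulAut.conj] using hc0
  have hecont' : Continuous e.symm := by
    have : (e.symm : G → G) = fun g => x * g * x⁻¹ := by
      funext g; simp [he, MulAut.conj]
    rw [this]; exact (continuous_mul_left x).mul continuous_const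
  set ν : Measure G := Measure.map e Measure.haar with hν
  haveI : ν.IsHaarMeasure := e.isHaarMeasure_map Measure.haar hecont hecont'
  have hmap : ∀ (B : Set G), MeasurableSet B →
      ν B = Measure.haar ((fun g => x * g * x⁻¹) '' B) := by
    intro B hB
    rw [hν, Measure.map_apply hecont.measurable hB]
    congr 1
    ext g
    simp only [Set.mem_preimage, Set.mem_image]
    constructor
    · intro h; exact ⟨e g, h, by simp [he, MulAut.conj, mul_assoc]⟩
    · rintro ⟨b, hb, rfl⟩
      simpa [he, MulAut.conj, mul_assoc] using hb
  set c : NNReal := Measure.haarScalarFactor ν Measure.haar with hc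
  have key : ∀ (B : Set G), MeasurableSet B → IsCompact (closure B) →
      ν B = c • Measure.haar B := fun B _ hBc =>
    Measure.measure_isMulInvariant_eq_smul_of_isCompact_closure ν Measure.haar hBc
  have hV1 : (c : ℝ≥0∞) * Measure.haar V = Measure.haar V := by
    have h1 := key V hVc.isClosed.measurableSet (by rwa [hVc.isClosed.closure_eq])
    have h2 := hmap V hVc.isClosed.measurableSet
    rw [hVi x] at h2
    rw [h1, ENNReal.smul_def, smul_eq_mul] at h2
    exact h2
  have hc1 : (c : ℝ≥0∞) = 1 := by
    have h0 : Measure.haar V ≠ 0 := (my_haar_pos V hVn).ne'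
    have ht : Measure.haar V ≠ ∞ := hVc.measure_lt_top.ne
    exact (ENNReal.mul_eq_right h0 ht).1 hV1
  calc Measure.haar ((fun g => x * g * x⁻¹) '' A) = ν A := (hmap A hA).symm
    _ = (c : ℝ≥0∞) * Measure.haar A := by
        rw [key A hA hAc, ENNReal.smul_def, smul_eq_mul]
    _ = Measure.haar A := by rw [hc1, one_mul]
end conj

section unif
variable {G : Type*} [Group G] [TopologicalSpace G] [IsTopologicalGroup G]
  [LocallyCompactSpace G] [T2Space G] [MeasurableSpace G] [BorelSpace G]

lemma my_unif (V : Set G) (hVc : IsCompact V) {ε : ℝ} (hε : 0 < ε) :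
    ∃ U ∈ 𝓝 (1 : G), ∀ u ∈ U, ∀ w : G, |myf V (u * w) - myf V w| ≤ ε := by
  have hδ : (ENNReal.ofReal (ε/2)) ≠ 0 := by
    simp [ENNReal.ofReal_eq_zero, not_le, half_pos hε]
  obtain ⟨U₁, hU₁, hU₁s⟩ := my_small V hVc hδ
  refine ⟨U₁ ∩ (fun u => u⁻¹) ⁻¹' U₁,
    Filter.inter_mem hU₁ ((continuous_inv.tendsto _).eventually_mem (by simpa using hU₁)), ?_⟩
  rintro u ⟨hu1, hu2⟩ w
  set μ : Measure G := Measure.haar with hμ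
  set Tu : Set G := (fun h => u * h) ⁻¹' V with hTu
  set Sw : Set G := (fun h => w⁻¹ * h) ⁻¹' V with hSw
  have hTum : MeasurableSet Tu := (measurable_const_mul u) hVc.isClosed.measurableSet
  have hSwm : MeasurableSet Sw := (measurable_const_mul w⁻¹) hVc.isClosed.measurableSet
  have hVm : MeasurableSet V := hVc.isClosed.measurableSet
  have hTufin : μ Tu ≠ ∞ := by
    rw [hTu, measure_preimage_mul]; exact hVc.measure_lt_top.ne
  have hVfin : μ V ≠ ∞ := hVc.measure_lt_top.ne
  -- the two diff bounds
  have hd1 : μ (Tu \ V) ≤ ENNReal.ofReal (ε/2) := hU₁s u hu1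
  have hd2 : μ (V \ Tu) ≤ ENNReal.ofReal (ε/2) := by
    have : μ (V \ Tu) = μ ((fun h => u⁻¹ * h) ⁻¹' (V \ Tu)) :=
      (measure_preimage_mul μ u⁻¹ _).symm
    rw [this]
    have hset : (fun h => u⁻¹ * h) ⁻¹' (V \ Tu) = ((fun h => u⁻¹ * h) ⁻¹' V) \ V := by
      ext h
      simp only [Set.mem_preimage, Set.mem_diff, hTu, Set.mem_preimage]
      constructor
      · rintro ⟨h1, h2⟩; exact ⟨h1, by simpa [mul_assoc] using h2⟩
      · rintro ⟨h1, h2⟩; exact ⟨h1, by simpa [mul_assoc] using h2⟩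
    rw [hset]
    exact hU₁s u⁻¹ hu2
  -- real comparison
  have key1 : μ (Tu ∩ Sw) ≤ μ (V ∩ Sw) + μ (Tu \ V) :=
    le_trans (measure_mono (fun g ⟨h1, h2⟩ => by
      by_cases hgV : g ∈ V
      · exact Or.inl ⟨hgV, h2⟩
      · exact Or.inr ⟨h1, hgV⟩)) (measure_union_le _ _)
  have key2 : μ (V ∩ Sw) ≤ μ (Tu ∩ Sw) + μ (V \ Tu) :=
    le_trans (measure_mono (fun g ⟨h1, h2⟩ => by
      by_cases hgT : g ∈ Tu
      · exact Or.inl ⟨hgT, h2⟩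
      · exact Or.inr ⟨h1, hgT⟩)) (measure_union_le _ _)
  have hfin1 : μ (Tu ∩ Sw) ≠ ∞ :=
    ((measure_mono Set.inter_subset_left).trans_lt (lt_top_iff_ne_top.2 hTufin)).ne
  have hfin2 : μ (V ∩ Sw) ≠ ∞ :=
    ((measure_mono Set.inter_subset_left).trans_lt (lt_top_iff_ne_top.2 hVfin)).ne
  rw [myf_mul]
  have habs : |(μ (Tu ∩ Sw)).toReal - (μ (V ∩ Sw)).toReal| ≤ ε := by
    rw [abs_sub_le_iff]
    constructor
    · have : (μ (Tu ∩ Sw)).toReal ≤ (μ (V ∩ Sw)).toReal + (μ (Tu \ V)).toReal := by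
        rw [← ENNReal.toReal_add hfin2 (lt_of_le_of_lt hd1 ENNReal.ofReal_lt_top).ne]
        exact ENNReal.toReal_mono
          (ENNReal.add_ne_top.2 ⟨hfin2, (lt_of_le_of_lt hd1 ENNReal.ofReal_lt_top).ne⟩) key1
      have h2 : (μ (Tu \ V)).toReal ≤ ε/2 := by
        rw [← ENNReal.toReal_ofReal (le_of_lt (half_pos hε))]
        exact ENNReal.toReal_mono ENNReal.ofReal_ne_top hd1
      linarith
    · have : (μ (V ∩ Sw)).toReal ≤ (μ (Tu ∩ Sw)).toReal + (μ (V \ Tu)).toReal := by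
        rw [← ENNReal.toReal_add hfin1 (lt_of_le_of_lt hd2 ENNReal.ofReal_lt_top).ne]
        exact ENNReal.toReal_mono
          (ENNReal.add_ne_top.2 ⟨hfin1, (lt_of_le_of_lt hd2 ENNReal.ofReal_lt_top).ne⟩) key2
      have h2 : (μ (V \ Tu)).toReal ≤ ε/2 := by
        rw [← ENNReal.toReal_ofReal (le_of_lt (half_pos hε))]
        exact ENNReal.toReal_mono ENNReal.ofReal_ne_top hd2
      linarith
  exact habs

lemma myf_continuous (V : Set G) (hVc : IsCompact V) : Continuous (myf V) := by
  rw [continuous_iff_continuousAt]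
  intro z₀
  unfold ContinuousAt
  rw [Metric.tendsto_nhds]
  intro ε hε
  obtain ⟨U, hU, hUs⟩ := my_unif V hVc (half_pos hε)
  have hnb : {z : G | z * z₀⁻¹ ∈ U} ∈ 𝓝 z₀ := by
    have hc : Continuous fun z : G => z * z₀⁻¹ := continuous_mul_right _
    have h1 : (fun z : G => z * z₀⁻¹) z₀ = 1 := by group
    exact (hc.tendsto z₀).eventually_mem (by simpa using hU)
  filter_upwards [hnb] with z hz
  have : myf V z = myf V ((z * z₀⁻¹) * z₀) := by rw [inv_mul_cancel_right]
  rw [Real.dist_eq, this]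
  exact lt_of_le_of_lt (hUs _ hz z₀) (half_lt_self hε)
end unif

section conj2
variable {G : Type*} [Group G] [TopologicalSpace G] [IsTopologicalGroup G]
  [LocallyCompactSpace G] [T2Space G] [MeasurableSpace G] [BorelSpace G]

lemma myf_conj (V : Set G) (hVc : IsCompact V) (hVn : V ∈ 𝓝 (1 : G))
    (hVi : ∀ x : G, (fun g => x * g * x⁻¹) '' V = V) (x z : G) :
    myf V (x * z * x⁻¹) = myf V z := by
  have hmemV : ∀ (a : G) (v : G), v ∈ V → a * v * a⁻¹ ∈ V := by
    intro a v hv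
    rw [← hVi a]; exact ⟨v, hv, rfl⟩
  have hVm : MeasurableSet V := hVc.isClosed.measurableSet
  have hAm : MeasurableSet (V ∩ (fun g => z⁻¹ * g) ⁻¹' V) :=
    hVm.inter ((measurable_const_mul z⁻¹) hVm)
  have hAcl : IsClosed (V ∩ (fun g => z⁻¹ * g) ⁻¹' V) :=
    hVc.isClosed.inter (hVc.isClosed.preimage (continuous_mul_left z⁻¹))
  have hAc : IsCompact (closure (V ∩ (fun g => z⁻¹ * g) ⁻¹' V)) := by
    rw [hAcl.closure_eq]
    exact hVc.of_isClosed_subset hAcl Set.inter_subset_left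
  have hset : V ∩ (fun g => (x * z * x⁻¹)⁻¹ * g) ⁻¹' V =
      (fun g => x * g * x⁻¹) '' (V ∩ (fun g => z⁻¹ * g) ⁻¹' V) := by
    ext g
    simp only [Set.mem_inter_iff, Set.mem_preimage, Set.mem_image]
    constructor
    · rintro ⟨hgV, hgS⟩
      refine ⟨x⁻¹ * g * x, ⟨?_, ?_⟩, by group⟩
      · have := hmemV x⁻¹ g hgV; simpa using this
      · have : (x * z * x⁻¹)⁻¹ * g = x * (z⁻¹ * (x⁻¹ * g * x)) * x⁻¹ := by group
        rw [this] at hgS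
        have h2 := hmemV x⁻¹ _ hgS
        have h3 : x⁻¹ * (x * (z⁻¹ * (x⁻¹ * g * x)) * x⁻¹) * x⁻¹⁻¹ =
            z⁻¹ * (x⁻¹ * g * x) := by group
        rwa [h3] at h2
    · rintro ⟨h, ⟨hhV, hhS⟩, rfl⟩
      constructor
      · exact hmemV x h hhV
      · have h4 : (x * z * x⁻¹)⁻¹ * (x * h * x⁻¹) = x * (z⁻¹ * h) * x⁻¹ := by group
        rw [h4]
        exact hmemV x _ hhS
  unfold myf
  rw [hset, my_conj_inv V hVc hVn hVi x _ hAm hAc]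

noncomputable def myF (V : Set G) (hVc : IsCompact V) : G →ᵇ ℂ :=
  BoundedContinuousFunction.ofNormedAddCommGroup (fun z => ((myf V z : ℝ) : ℂ))
    (Complex.continuous_ofReal.comp (myf_continuous V hVc))
    ((Measure.haar : Measure G) V).toReal
    (fun z => by
      rw [Complex.norm_real, Real.norm_eq_abs, abs_of_nonneg (myf_nonneg V z)]
      exact myf_le V hVc z)

lemma myF_apply (V : Set G) (hVc : IsCompact V) (z : G) :
    myF V hVc z = ((myf V z : ℝ) : ℂ) := rfl
end conj2

section mainlemmas
variable {G : Type*} [Group G] [TopologicalSpace G] [IsTopologicalGroup G]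

lemma my_sum {n : ℕ} (μ : (G →ᵇ ℂ) →L[ℂ] ℂ) (h : Fin n → (G →ᵇ ℂ)) {M : ℝ} (hM0 : 0 ≤ M)
    (hM : ∀ i z, ‖h i z‖ ≤ M) (hd : ∀ i j z, i ≠ j → h i z ≠ 0 → h j z = 0) :
    ∑ i, ‖μ (h i)‖ ≤ ‖μ‖ * M := by
  classical
  set c : Fin n → ℂ := fun i => if μ (h i) = 0 then 1 else (‖μ (h i)‖ : ℂ) / μ (h i) with hc
  have hc_norm : ∀ i, ‖c i‖ = 1 := by
    intro i
    rw [hc]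
    by_cases hzero : μ (h i) = 0
    · simp [hzero]
    · simp only [hzero, if_false, norm_div, Complex.norm_real, Real.norm_eq_abs,
        abs_of_nonneg (norm_nonneg _)]
      rw [div_self (norm_ne_zero_iff.2 hzero)]
  have hc_mul : ∀ i, c i * μ (h i) = (‖μ (h i)‖ : ℂ) := by
    intro i
    rw [hc]
    by_cases hzero : μ (h i) = 0
    · simp [hzero]
    · simp only [hzero, if_false]
      rw [div_mul_cancel₀ _ hzero]
  set g : G →ᵇ ℂ := ∑ i, c i • h i with hg
  have hgz : ∀ z, g z = ∑ i, c i * h i z := by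
    intro z
    rw [hg]
    simp
  have hgle : ∀ z, ‖g z‖ ≤ M := by
    intro z
    rw [hgz]
    by_cases hex : ∃ i, h i z ≠ 0
    · obtain ⟨i₀, hi₀⟩ := hex
      have : ∑ i, c i * h i z = c i₀ * h i₀ z :=
        Finset.sum_eq_single i₀
          (fun b _ hb => by rw [hd i₀ b z (Ne.symm hb) hi₀, mul_zero])
          (by intro hmem; exact absurd (Finset.mem_univ i₀) hmem)
      rw [this, norm_mul, hc_norm, one_mul]
      exact hM i₀ z
    · push_neg at hex
      have : ∑ i, c i * h i z = 0 := Finset.sum_eq_zero (fun i _ => by rw [hex i, mul_zero])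
      rw [this, norm_zero]
      exact hM0
  have hgnorm : ‖g‖ ≤ M := (BoundedContinuousFunction.norm_le hM0).2 hgle
  have hμg : μ g = ((∑ i, ‖μ (h i)‖ : ℝ) : ℂ) := by
    rw [hg, map_sum]
    push_cast
    congr 1
    funext i
    rw [ContinuousLinearMap.map_smul, smul_eq_mul, hc_mul]
  calc ∑ i, ‖μ (h i)‖ = ‖μ g‖ := by
        rw [hμg, Complex.norm_real, Real.norm_eq_abs,
          abs_of_nonneg (Finset.sum_nonneg (fun i _ => norm_nonneg _))]
    _ ≤ ‖μ‖ * ‖g‖ := μ.le_opNorm g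
    _ ≤ ‖μ‖ * M := mul_le_mul_of_nonneg_left hgnorm (norm_nonneg μ)

end mainlemmas


section final
variable {G : Type*} [Group G] [TopologicalSpace G] [IsTopologicalGroup G]
  [LocallyCompactSpace G] [T2Space G] [MeasurableSpace G] [BorelSpace G]

lemma my_dist_coe (a b : ℝ) : dist ((a : ℝ) : ℂ) ((b : ℝ) : ℂ) = |a - b| := by
  rw [Complex.dist_eq, ← Complex.ofReal_sub]
  rw [Complex.norm_real, Real.norm_eq_abs]

lemma my_translate_cont (V : Set G) (hVc : IsCompact V) :
    Continuous fun x : G => biTranslate x 1 (myF V hVc) := by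
  rw [continuous_iff_continuousAt]
  intro x₀
  unfold ContinuousAt
  rw [Metric.tendsto_nhds]
  intro ε hε
  obtain ⟨U, hU, hUs⟩ := my_unif V hVc (half_pos hε)
  have hnb : {x : G | x * x₀⁻¹ ∈ U} ∈ 𝓝 x₀ := by
    have hc : Continuous fun x : G => x * x₀⁻¹ := continuous_mul_right _
    exact (hc.tendsto x₀).eventually_mem (by simpa using hU)
  filter_upwards [hnb] with x hx
  have hdle : dist (biTranslate x 1 (myF V hVc)) (biTranslate x₀ 1 (myF V hVc)) ≤ ε / 2 := by
    rw [BoundedContinuousFunction.dist_le (le_of_lt (half_pos hε))]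
    intro z
    simp only [biTranslate_apply, mul_one, myF_apply]
    rw [my_dist_coe]
    have : x * z = (x * x₀⁻¹) * (x₀ * z) := by group
    rw [this]
    exact hUs _ hx (x₀ * z)
  exact lt_of_le_of_lt hdle (half_lt_self hε)

lemma my_tendsto (V : Set G) (hVc : IsCompact V) (hVn : V ∈ 𝓝 (1 : G))
    (μ : (G →ᵇ ℂ) →L[ℂ] ℂ) :
    Tendsto (fun x : G => μ (biTranslate x 1 (myF V hVc))) (cocompact G) (𝓝 0) := by
  set F : G →ᵇ ℂ := myF V hVc with hF
  have hsupp : ∀ x z : G, biTranslate x 1 F z ≠ 0 → x * z ∈ V * V⁻¹ := by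
    intro x z hne
    by_contra hmem
    apply hne
    simp only [hF, biTranslate_apply, mul_one, myF_apply]
    rw [myf_eq_zero V _ hmem]
    norm_num
  rw [Metric.tendsto_nhds]
  intro ε hε
  by_contra hcon
  have hfreq : ∀ C : Set G, IsCompact C →
      ∃ x ∈ {x : G | ε ≤ ‖μ (biTranslate x 1 F)‖}, x ∉ C := by
    intro C hC
    by_contra hno
    push_neg at hno
    apply hcon
    refine (hasBasis_cocompact.eventually_iff).2 ⟨C, hC, ?_⟩
    intro x hxC
    rw [dist_zero_right]
    by_contra hge
    push_neg at hge
    exact hxC (hno x hge)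
  set K : Set G := V * V⁻¹ with hK
  have hKc : IsCompact K := hVc.mul hVc.inv
  set Ks : Set G := K * K⁻¹ with hKs
  have hKsc : IsCompact Ks := hKc.mul hKc.inv
  have hKssymm : ∀ k ∈ Ks, k⁻¹ ∈ Ks := by
    rintro k ⟨a, ha, b, hb, rfl⟩
    rw [mul_inv_rev]
    exact Set.mul_mem_mul (Set.mem_inv.1 hb) (Set.inv_mem_inv.2 ha)
  obtain ⟨n, hn⟩ := exists_nat_gt (‖μ‖ * ‖F‖ / ε)
  obtain ⟨s, hsQ, hsep⟩ := my_exists_sep' Ks hKsc hKssymm _ hfreq n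
  set h : Fin n → (G →ᵇ ℂ) := fun i => biTranslate (s i) 1 F with hh
  have hM : ∀ (i : Fin n) (z : G), ‖h i z‖ ≤ ‖F‖ := by
    intro i z
    calc ‖h i z‖ ≤ ‖h i‖ := BoundedContinuousFunction.norm_coe_le_norm _ z
      _ = ‖F‖ := by
          rw [hh]
          apply le_antisymm
          · refine (BoundedContinuousFunction.norm_le (norm_nonneg F)).2 (fun z => ?_)
            simpa using BoundedContinuousFunction.norm_coe_le_norm F (s i * z * 1)
          · refine (BoundedContinuousFunction.norm_le (norm_nonneg _)).2 (fun z => ?_)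
            have := BoundedContinuousFunction.norm_coe_le_norm (biTranslate (s i) 1 F)
              ((s i)⁻¹ * z)
            simpa [mul_assoc] using this
  have hd : ∀ (i j : Fin n) (z : G), i ≠ j → h i z ≠ 0 → h j z = 0 := by
    intro i j z hij hiz
    by_contra hjz
    have h1 : s i * z ∈ K := hsupp (s i) z hiz
    have h2 : s j * z ∈ K := hsupp (s j) z hjz
    refine hsep i j hij ((s j * z) * (s i * z)⁻¹) (Set.mul_mem_mul h2 (Set.inv_mem_inv.2 h1)) ?_
    group
  have hsum := my_sum μ h (norm_nonneg F) hM hd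
  have hlow : (n : ℝ) * ε ≤ ∑ i, ‖μ (h i)‖ := by
    calc (n : ℝ) * ε = ∑ _i : Fin n, ε := by
          rw [Finset.sum_const, Finset.card_univ, Fintype.card_fin, nsmul_eq_mul]
      _ ≤ ∑ i, ‖μ (h i)‖ := Finset.sum_le_sum (fun i _ => hsQ i)
  have : (n : ℝ) * ε ≤ ‖μ‖ * ‖F‖ := le_trans hlow hsum
  rw [div_lt_iff₀ hε] at hn
  linarith

end final

/-- If `G` is a noncompact locally compact IN-group, then `AP(G) ⊊ WS(G)`:
there is a bounded continuous function whose double orbit is relatively weakly compact but not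
relatively norm compact. -/
theorem stmt10 {G : Type*} [Group G] [TopologicalSpace G] [IsTopologicalGroup G]
    [LocallyCompactSpace G] [T2Space G]
    (hnc : ¬ CompactSpace G) (hIN : IsINGroup G) :
    ∃ f : G →ᵇ ℂ, IsWS f ∧ ¬ IsAP f := by
  classical
  letI : MeasurableSpace G := borel G
  haveI : BorelSpace G := ⟨rfl⟩
  obtain ⟨V, hVc, hVn, hVi⟩ := hIN
  set F : G →ᵇ ℂ := myF V hVc with hFdef
  have hbi : ∀ x y : G, biTranslate x y F = biTranslate (y * x) 1 F := by
    intro x y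
    ext z
    simp only [biTranslate_apply, mul_one, hFdef, myF_apply, Complex.ofReal_inj]
    have h1 := myf_conj V hVc hVn hVi y (x * z * y)
    have h2 : y * (x * z * y) * y⁻¹ = y * x * z := by group
    rw [h2] at h1
    exact h1.symm
  set T : G → (G →ᵇ ℂ) := fun x => biTranslate x 1 F with hT
  have hQuniv : ∀ C : Set G, IsCompact C → ∃ x ∈ (Set.univ : Set G), x ∉ C := by
    intro C hC
    by_contra hno
    push_neg at hno
    exact hnc ⟨hC.of_isClosed_subset isClosed_univ (fun x _ => hno x trivial)⟩
  refine ⟨F, ?_, ?_⟩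
  · -- IsWS
    set Φ : OnePoint G → WeakSpace ℂ (G →ᵇ ℂ) :=
      fun p => p.elim 0 (fun x => toWeakSpace ℂ (G →ᵇ ℂ) (T x)) with hΦ
    have hΦcont : Continuous Φ := by
      apply WeakBilin.continuous_of_continuous_eval
      intro y
      have heq : (fun p => (topDualPairing ℂ (G →ᵇ ℂ)).flip (Φ p) y) =
          fun p : OnePoint G => p.elim 0 (fun x => y (T x)) := by
        funext p
        induction p using OnePoint.rec with
        | infty => simp [hΦ]; exact map_zero y
        | coe x => rfl
      rw [heq, OnePoint.continuous_iff]
      constructor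
      · have h0 := my_tendsto V hVc hVn y
        rw [coclosedCompact_eq_cocompact]
        simpa using h0
      · exact y.continuous.comp (my_translate_cont V hVc)
    have hcpt : IsCompact (closure (Set.range Φ)) := (isCompact_range hΦcont).closure
    unfold IsWS RelWeaklyCompact
    refine IsCompact.of_isClosed_subset hcpt isClosed_closure (closure_mono ?_)
    rintro w ⟨g, ⟨x, yy, rfl⟩, rfl⟩
    refine ⟨((yy * x : G) : OnePoint G), ?_⟩
    show (toWeakSpace ℂ (G →ᵇ ℂ)) (T (yy * x)) = _
    rw [hT]
    simp only []
    rw [← hbi x yy]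
  · -- ¬ IsAP
    intro hAP
    have hδpos : 0 < ((Measure.haar : Measure G) V).toReal :=
      ENNReal.toReal_pos (my_haar_pos V hVn).ne' hVc.measure_lt_top.ne
    set δ : ℝ := ((Measure.haar : Measure G) V).toReal with hδ
    have htb := hAP.totallyBounded
    rw [Metric.totallyBounded_iff] at htb
    obtain ⟨t, htfin, hcover⟩ := htb (δ/3) (by positivity)
    set Ks : Set G := (V * V⁻¹) ∪ (V * V⁻¹)⁻¹ with hKs
    have hKsc : IsCompact Ks := (hVc.mul hVc.inv).union (hVc.mul hVc.inv).inv
    have hKssymm : ∀ k ∈ Ks, k⁻¹ ∈ Ks := by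
      rintro k (hk | hk)
      · exact Or.inr (Set.inv_mem_inv.2 hk)
      · exact Or.inl (Set.mem_inv.1 hk)
    obtain ⟨s, _, hsep⟩ := my_exists_sep' Ks hKsc hKssymm Set.univ hQuniv (htfin.toFinset.card + 1)
    have hnotin : ∀ i j, i ≠ j → s j * (s i)⁻¹ ∉ V * V⁻¹ := by
      intro i j hij hmem
      exact hsep i j hij (s j * (s i)⁻¹) (Or.inl hmem) (by group)
    have hdist : ∀ i j, i ≠ j → δ ≤ dist (T (s i)) (T (s j)) := by
      intro i j hij
      have hpt := BoundedContinuousFunction.dist_coe_le_dist (f := T (s i)) (g := T (s j)) (s i)⁻¹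
      have hvi : T (s i) (s i)⁻¹ = ((δ : ℝ) : ℂ) := by
        simp only [hT, biTranslate_apply, mul_one, hFdef, myF_apply, mul_inv_cancel]
        rw [myf_one]
      have hvj : T (s j) (s i)⁻¹ = ((0 : ℝ) : ℂ) := by
        simp only [hT, biTranslate_apply, mul_one, hFdef, myF_apply]
        rw [myf_eq_zero V _ (hnotin i j hij)]
      rw [hvi, hvj, my_dist_coe, sub_zero, abs_of_pos hδpos] at hpt
      exact hpt
    have hmem : ∀ i, T (s i) ∈ closure (doubleOrbit F) :=
      fun i => subset_closure ⟨s i, 1, rfl⟩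
    have hchoice : ∀ i, ∃ c ∈ t, T (s i) ∈ Metric.ball c (δ/3) := by
      intro i
      have := hcover (hmem i)
      simpa using this
    choose c hct hcball using hchoice
    have hmapsto : ∀ i ∈ (Finset.univ : Finset (Fin (htfin.toFinset.card + 1))),
        c i ∈ htfin.toFinset := by
      intro i _
      exact htfin.mem_toFinset.2 (hct i)
    have hcard : htfin.toFinset.card < (Finset.univ : Finset (Fin (htfin.toFinset.card + 1))).card := by
      simp
    obtain ⟨i, _, j, _, hij, hcij⟩ :=
      Finset.exists_ne_map_eq_of_card_lt_of_maps_to hcard hmapsto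
    have hd1 := hcball i
    have hd2 := hcball j
    rw [Metric.mem_ball] at hd1 hd2
    have : dist (T (s i)) (T (s j)) < δ := by
      calc dist (T (s i)) (T (s j)) ≤ dist (T (s i)) (c i) + dist (c j) (T (s j)) := by
            rw [hcij]
            exact dist_triangle _ _ _
        _ < δ/3 + δ/3 := by
            rw [dist_comm (c j)]
            exact add_lt_add hd1 hd2
        _ < δ := by linarith
    exact absurd (hdist i j hij) (not_le.2 this)
end

section
/- Let G be a discrete group in which every conjugacy class is finite (an FC-group). Then G is a WS-group, i.e., WS(G) = WAP(G), if and only if the center Z(G) has finite index in G. -/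
open BoundedContinuousFunction Topology Filter MeasureTheory

set_option linter.unusedSectionVars false
set_option linter.unusedVariables false
set_option maxHeartbeats 1000000

section WeakFacts

variable {G : Type*} [Group G] [TopologicalSpace G] [DiscreteTopology G] [IsTopologicalGroup G]

set_option linter.unusedSectionVars false

theorem pairing_flip_injective :
    Function.Injective ((topDualPairing ℂ (G →ᵇ ℂ)).flip) := by
  intro f g h
  ext z
  have := congrArg (fun (L : ((G →ᵇ ℂ) →L[ℂ] ℂ) →ₗ[ℂ] ℂ) => L (evalCLM ℂ z)) h
  simpa using this

noncomputable instance : T2Space (WeakSpace ℂ (G →ᵇ ℂ)) :=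
  (WeakBilin.isEmbedding pairing_flip_injective).t2Space

theorem weak_tendsto_iff {α : Type*} {l : Filter α} {f : α → WeakSpace ℂ (G →ᵇ ℂ)}
    {x : WeakSpace ℂ (G →ᵇ ℂ)} :
    Tendsto f l (𝓝 x) ↔ ∀ μ : (G →ᵇ ℂ) →L[ℂ] ℂ,
      Tendsto (fun a => μ (toWeakSpace ℂ (G →ᵇ ℂ) |>.symm (f a))) l
        (𝓝 (μ (toWeakSpace ℂ (G →ᵇ ℂ) |>.symm x))) :=
  WeakBilin.tendsto_iff_forall_eval_tendsto _ pairing_flip_injective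

/-- composition with a fixed self-map of `G`, as a continuous linear map. -/
noncomputable def compCLM (c : C(G, G)) : (G →ᵇ ℂ) →L[ℂ] (G →ᵇ ℂ) :=
  LinearMap.mkContinuous
    { toFun := fun f => f.compContinuous c
      map_add' := fun f g => by
        ext z; show (f + g) (c z) = f (c z) + g (c z); simp
      map_smul' := fun r f => by
        ext z; show (r • f) (c z) = r * f (c z); simp }
    1 (fun f => by simpa using f.norm_compContinuous_le c)

@[simp] theorem compCLM_apply (c : C(G, G)) (f : G →ᵇ ℂ) (z : G) :
    compCLM c f z = f (c z) := rfl

end WeakFacts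

section MPR

variable {G : Type*} [Group G] [TopologicalSpace G] [DiscreteTopology G] [IsTopologicalGroup G]

theorem isWAP_of_isWS {f : G →ᵇ ℂ} (h : IsWS f) : IsWAP f := by
  refine h.of_isClosed_subset isClosed_closure (closure_mono (Set.image_mono ?_))
  rintro g ⟨x, rfl⟩
  exact ⟨x, 1, rfl⟩

/-- conjugation by `t` as a continuous map on discrete `G`. -/
noncomputable def conjMap (t : G) : C(G, G) :=
  ⟨fun z => t⁻¹ * z * t, continuous_of_discreteTopology⟩

theorem biTranslate_eq_comp (f : G →ᵇ ℂ) (x y t : G) (ht : t⁻¹ * y ∈ Subgroup.center G) :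
    biTranslate x y f = compCLM (conjMap t) (biTranslate (x * y) 1 f) := by
  ext z
  have hc := Subgroup.mem_center_iff.mp ht
  simp only [biTranslate_apply, compCLM_apply, conjMap, ContinuousMap.coe_mk, mul_one]
  congr 1
  have h2 : t⁻¹ * y * t = y := by rw [← hc t, mul_inv_cancel_left]
  symm
  calc x * y * (t⁻¹ * z * t)
      = x * (t * (t⁻¹ * y)) * (t⁻¹ * z * t) := by rw [mul_inv_cancel_left]
    _ = x * t * (t⁻¹ * y * (t⁻¹ * z)) * t := by simp only [mul_assoc]
    _ = x * t * (t⁻¹ * z * (t⁻¹ * y)) * t := by rw [hc (t⁻¹ * z)]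
    _ = x * z * (t⁻¹ * y * t) := by simp only [mul_assoc, mul_inv_cancel_left]
    _ = x * z * y := by rw [h2]

theorem isWS_of_isWAP_of_finiteIndex [hZ : (Subgroup.center G).FiniteIndex]
    {f : G →ᵇ ℂ} (h : IsWAP f) : IsWS f := by
  classical
  set V := toWeakSpace ℂ (G →ᵇ ℂ)
  set C₀ := closure (V '' leftOrbit f) with hC₀
  set K := ⋃ q : G ⧸ Subgroup.center G,
    (WeakSpace.map (compCLM (conjMap (q.out))) '' C₀) with hK
  have hKcomp : IsCompact K :=
    isCompact_iUnion fun q => h.image (WeakSpace.map _).continuous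
  have hsub : V '' doubleOrbit f ⊆ K := by
    rintro w ⟨g, ⟨x, y, rfl⟩, rfl⟩
    have hmem : (QuotientGroup.mk y : G ⧸ Subgroup.center G).out⁻¹ * y
        ∈ Subgroup.center G := by
      rw [← QuotientGroup.eq]
      exact (QuotientGroup.out_eq' _)
    refine Set.mem_iUnion.mpr ⟨QuotientGroup.mk y, ?_⟩
    refine ⟨V (biTranslate (x * y) 1 f), subset_closure ⟨_, ⟨x * y, rfl⟩, rfl⟩, ?_⟩
    rw [biTranslate_eq_comp f x y _ hmem]
    rfl
  exact hKcomp.of_isClosed_subset isClosed_closure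
    (closure_minimal hsub hKcomp.isClosed)

end MPR

section Indicators

variable {α : Type*} [TopologicalSpace α] [DiscreteTopology α]

open scoped Classical in
/-- indicator function of a set as a bounded continuous function (discrete space) -/
noncomputable def ind (A : Set α) : α →ᵇ ℂ :=
  BoundedContinuousFunction.ofNormedAddCommGroup
    (fun z => if z ∈ A then (1 : ℂ) else 0) continuous_of_discreteTopology 1
    (fun z => by by_cases h : z ∈ A <;> simp [h])

theorem ind_apply_mem {A : Set α} {z : α} (h : z ∈ A) : ind A z = 1 := by
  simp [ind, BoundedContinuousFunction.coe_ofNormedAddCommGroup, h]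

theorem ind_apply_not_mem {A : Set α} {z : α} (h : z ∉ A) : ind A z = 0 := by
  simp [ind, BoundedContinuousFunction.coe_ofNormedAddCommGroup, h]

theorem norm_ind_apply_le (A : Set α) (z : α) : ‖ind A z‖ ≤ 1 := by
  by_cases h : z ∈ A
  · rw [ind_apply_mem h]; simp
  · rw [ind_apply_not_mem h]; simp

theorem norm_ind_le (A : Set α) : ‖ind A‖ ≤ 1 :=
  (BoundedContinuousFunction.norm_le zero_le_one).mpr (norm_ind_apply_le A)

theorem ind_injective_ne {A B : Set α} (h : A ≠ B) : ind A ≠ ind B := by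
  intro hEq
  apply h
  ext z
  have hz := congrArg (fun f : α →ᵇ ℂ => f z) hEq
  constructor
  · intro hmem
    by_contra hmem'
    rw [ind_apply_mem hmem, ind_apply_not_mem hmem'] at hz
    exact one_ne_zero hz
  · intro hmem
    by_contra hmem'
    rw [ind_apply_not_mem hmem', ind_apply_mem hmem] at hz
    exact zero_ne_one hz

/-- the "Dirac" function at a point -/
noncomputable def dirac (g : α) : α →ᵇ ℂ := ind (Set.singleton g)

theorem dirac_injective : Function.Injective (dirac (α := α)) := by
  intro g g' h
  by_contra hne
  have hz := congrArg (fun f : α →ᵇ ℂ => f g) h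
  simp only [dirac] at hz
  rw [ind_apply_mem (show g ∈ Set.singleton g from rfl),
    ind_apply_not_mem (show g ∉ Set.singleton g' from fun hc => hne hc)] at hz
  exact one_ne_zero hz

theorem ind_diff_eq {A B : Set α} (h : B ⊆ A) : ind A - ind B = ind (A \ B) := by
  ext z
  simp only [BoundedContinuousFunction.coe_sub, Pi.sub_apply]
  by_cases hz : z ∈ B
  · rw [ind_apply_mem (h hz), ind_apply_mem hz, ind_apply_not_mem (fun hc => hc.2 hz)]; ring
  · by_cases hz' : z ∈ A
    · rw [ind_apply_mem hz', ind_apply_not_mem hz, ind_apply_mem (A := A \ B) ⟨hz', hz⟩]; ring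
    · rw [ind_apply_not_mem hz', ind_apply_not_mem hz,
        ind_apply_not_mem (fun hc => hz' hc.1)]; ring

theorem ind_finite_eq_sum (A : Set α) (hA : A.Finite) :
    ind A = ∑ g ∈ hA.toFinset, dirac g := by
  classical
  ext z
  rw [BoundedContinuousFunction.coe_sum, Finset.sum_apply]
  by_cases hz : z ∈ A
  · rw [ind_apply_mem hz]
    rw [Finset.sum_eq_single z]
    · exact (ind_apply_mem (show z ∈ Set.singleton z from rfl)).symm
    · intro b _ hbz
      exact ind_apply_not_mem (fun hc => hbz (show z = b from hc).symm)
    · intro hc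
      exact absurd (hA.mem_toFinset.mpr hz) hc
  · rw [ind_apply_not_mem hz]
    symm
    refine Finset.sum_eq_zero (fun g hg => ?_)
    exact ind_apply_not_mem
      (fun hzg => hz ((show z = g from hzg) ▸ (hA.mem_toFinset.mp hg)))

/-- norm bound for unimodular combinations of indicators of pairwise disjoint sets -/
theorem norm_sum_ind_le {ι : Type*} (s : Finset ι) (A : ι → Set α) (c : ι → ℂ)
    (hdisj : ∀ i ∈ s, ∀ j ∈ s, i ≠ j → A i ∩ A j = ∅)
    (hc : ∀ i ∈ s, ‖c i‖ ≤ 1) :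
    ‖∑ i ∈ s, c i • ind (A i)‖ ≤ 1 := by
  classical
  refine (BoundedContinuousFunction.norm_le zero_le_one).mpr (fun z => ?_)
  rw [BoundedContinuousFunction.coe_sum, Finset.sum_apply]
  by_cases hz : ∃ i ∈ s, z ∈ A i
  · obtain ⟨i₀, hi₀s, hi₀⟩ := hz
    have hcongr : ∀ i ∈ s, (c i • ind (A i)) z = if i = i₀ then (c i • ind (A i)) z else 0 := by
      intro i hi
      split
      · rfl
      · rename_i hne
        have hzi : z ∉ A i := by
          intro hzi
          have := hdisj i hi i₀ hi₀s hne
          exact absurd (Set.mem_inter hzi hi₀) (by rw [this]; exact Set.notMem_empty z)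
        simp [ind_apply_not_mem hzi]
    rw [Finset.sum_congr rfl hcongr, Finset.sum_ite_eq' s i₀]
    rw [if_pos hi₀s]
    simp only [BoundedContinuousFunction.coe_smul, Pi.smul_apply, smul_eq_mul]
    rw [ind_apply_mem hi₀, mul_one]
    exact hc i₀ hi₀s
  · push_neg at hz
    have hcongr : ∀ i ∈ s, (c i • ind (A i)) z = 0 := by
      intro i hi
      simp [ind_apply_not_mem (hz i hi)]
    rw [Finset.sum_congr rfl hcongr]
    simp

end Indicators


section DualDecomposition

variable {α : Type*} [TopologicalSpace α] [DiscreteTopology α]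
variable (μ : (α →ᵇ ℂ) →L[ℂ] ℂ)

/-- point masses of a functional -/
noncomputable def wt (g : α) : ℂ := μ (dirac g)

theorem sum_norm_wt_le (s : Finset α) : ∑ g ∈ s, ‖wt μ g‖ ≤ ‖μ‖ := by
  classical
  set c : α → ℂ := fun g => if wt μ g = 0 then 1 else (‖wt μ g‖ : ℂ) / wt μ g with hc
  have hc1 : ∀ g, ‖c g‖ ≤ 1 := by
    intro g
    rw [hc]
    dsimp only
    split
    · simp
    · rename_i hne
      rw [norm_div, Complex.norm_real, norm_norm, div_self]
      simpa using hne
  have hcw : ∀ g, c g * wt μ g = (‖wt μ g‖ : ℂ) := by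
    intro g
    rw [hc]
    dsimp only
    split
    · rename_i h0; simp [h0]
    · rename_i hne; rw [div_mul_cancel₀]; exact hne
  set h : α →ᵇ ℂ := ∑ g ∈ s, c g • dirac g with hh
  have hnorm : ‖h‖ ≤ 1 := by
    rw [hh]
    simp only [dirac]
    exact norm_sum_ind_le s (fun g => Set.singleton g) c
      (fun i _ j _ hij => by
        ext x
        simp only [Set.mem_inter_iff, Set.mem_empty_iff_false, iff_false, not_and]
        intro hxi hxj
        exact hij ((show x = i from hxi) ▸ (show x = j from hxj) ▸ rfl))
      (fun i _ => hc1 i)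
  have hμh : μ h = ((∑ g ∈ s, ‖wt μ g‖ : ℝ) : ℂ) := by
    rw [hh, map_sum]
    push_cast
    refine Finset.sum_congr rfl (fun g _ => ?_)
    rw [ContinuousLinearMap.map_smul, smul_eq_mul]
    exact hcw g
  have hbound : ‖μ h‖ ≤ ‖μ‖ := by
    calc ‖μ h‖ ≤ ‖μ‖ * ‖h‖ := μ.le_opNorm h
      _ ≤ ‖μ‖ * 1 := by
        exact mul_le_mul_of_nonneg_left hnorm (norm_nonneg μ)
      _ = ‖μ‖ := mul_one _
  rw [hμh] at hbound
  rw [Complex.norm_real] at hbound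
  calc ∑ g ∈ s, ‖wt μ g‖ ≤ |∑ g ∈ s, ‖wt μ g‖| := le_abs_self _
    _ ≤ ‖μ‖ := by simpa using hbound

theorem wt_summable : Summable (fun g => ‖wt μ g‖) :=
  summable_of_sum_le (fun g => norm_nonneg _) (fun s => sum_norm_wt_le μ s)

theorem wt_mul_norm_summable (f : α →ᵇ ℂ) : Summable (fun g => ‖wt μ g * f g‖) := by
  refine Summable.of_nonneg_of_le (fun g => norm_nonneg _) (fun g => ?_)
    ((wt_summable μ).mul_right ‖f‖)
  rw [norm_mul]
  exact mul_le_mul_of_nonneg_left (f.norm_coe_le_norm g) (norm_nonneg _)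

theorem wt_mul_summable (f : α →ᵇ ℂ) : Summable (fun g => wt μ g * f g) :=
  Summable.of_norm (wt_mul_norm_summable μ f)

/-- the ℓ¹-part of a functional -/
noncomputable def wtCLM : (α →ᵇ ℂ) →L[ℂ] ℂ :=
  LinearMap.mkContinuous
    { toFun := fun f => ∑' g, wt μ g * f g
      map_add' := fun f₁ f₂ => by
        rw [← Summable.tsum_add (wt_mul_summable μ f₁) (wt_mul_summable μ f₂)]
        refine tsum_congr (fun g => ?_)
        simp [mul_add]
      map_smul' := fun r f => by
        simp only [RingHom.id_apply, smul_eq_mul]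
        rw [← tsum_mul_left]
        refine tsum_congr (fun g => ?_)
        simp only [BoundedContinuousFunction.coe_smul, Pi.smul_apply, smul_eq_mul]
        ring }
    ‖μ‖
    (fun f => by
      calc ‖∑' g, wt μ g * f g‖ ≤ ∑' g, ‖wt μ g * f g‖ :=
            norm_tsum_le_tsum_norm (wt_mul_norm_summable μ f)
        _ ≤ ∑' g, ‖wt μ g‖ * ‖f‖ := by
            refine Summable.tsum_le_tsum (fun g => ?_) (wt_mul_norm_summable μ f)
              ((wt_summable μ).mul_right ‖f‖)
            rw [norm_mul]
            exact mul_le_mul_of_nonneg_left (f.norm_coe_le_norm g) (norm_nonneg _)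
        _ = (∑' g, ‖wt μ g‖) * ‖f‖ := tsum_mul_right
        _ ≤ ‖μ‖ * ‖f‖ := by
            refine mul_le_mul_of_nonneg_right ?_ (norm_nonneg f)
            exact Summable.tsum_le_of_sum_le (wt_summable μ) (fun s => sum_norm_wt_le μ s))

theorem wtCLM_apply (f : α →ᵇ ℂ) : wtCLM μ f = ∑' g, wt μ g * f g := rfl

/-- the singular part of a functional -/
noncomputable def sing : (α →ᵇ ℂ) →L[ℂ] ℂ := μ - wtCLM μ

theorem sing_apply (f : α →ᵇ ℂ) : sing μ f = μ f - wtCLM μ f := rfl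

theorem sing_dirac (g : α) : sing μ (dirac g) = 0 := by
  rw [sing_apply, wtCLM_apply]
  have : ∑' h, wt μ h * dirac g h = wt μ g := by
    rw [tsum_eq_single g]
    · rw [show dirac g g = 1 from ind_apply_mem (show g ∈ Set.singleton g from rfl), mul_one]
    · intro b hb
      rw [show dirac g b = 0 from ind_apply_not_mem (fun hc => hb (show b = g from hc)), mul_zero]
  rw [this, wt, sub_self]

theorem sing_ind_finite {A : Set α} (hA : A.Finite) : sing μ (ind A) = 0 := by
  rw [ind_finite_eq_sum A hA, map_sum]
  exact Finset.sum_eq_zero (fun g _ => sing_dirac μ g)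

theorem sing_ind_congr {A B : Set α} (hBA : B ⊆ A) (h : (A \ B).Finite) :
    sing μ (ind A) = sing μ (ind B) := by
  have : sing μ (ind A) - sing μ (ind B) = 0 := by
    rw [← map_sub, ind_diff_eq hBA, sing_ind_finite μ h]
  linear_combination this

theorem wt_large_finite {ε : ℝ} (hε : 0 < ε) : {g : α | ε ≤ ‖wt μ g‖}.Finite := by
  have htend : Filter.Tendsto (fun g => ‖wt μ g‖) Filter.cofinite (𝓝 0) :=
    (wt_summable μ).tendsto_cofinite_zero
  have hev : ∀ᶠ g in Filter.cofinite, ‖wt μ g‖ < ε := htend.eventually (gt_mem_nhds hε)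
  rw [Filter.eventually_cofinite] at hev
  exact hev.subset (fun g hg => not_lt.mpr hg)

end DualDecomposition


section WAPMain

variable {G : Type*} [Group G] [TopologicalSpace G] [DiscreteTopology G] [IsTopologicalGroup G]

/-- the left translate of a set -/
def trE (E : Set G) (x : G) : Set G := (fun e => x * e) '' E

theorem mem_trE {E : Set G} {x t : G} : t ∈ trE E x ↔ x⁻¹ * t ∈ E := by
  constructor
  · rintro ⟨e, he, rfl⟩
    simpa using he
  · intro h
    exact ⟨x⁻¹ * t, h, by simp⟩

theorem biTranslate_ind (E : Set G) (x : G) :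
    biTranslate x 1 (ind E) = ind (trE E x⁻¹) := by
  ext z
  rw [biTranslate_apply, mul_one]
  by_cases h : x * z ∈ E
  · rw [ind_apply_mem h, ind_apply_mem (mem_trE.mpr (by simpa using h))]
  · rw [ind_apply_not_mem h, ind_apply_not_mem (fun hc => h (by simpa using mem_trE.mp hc))]

variable (E : Set G)

/-- the left orbit map into the weak space -/
noncomputable def phiE (x : G) : WeakSpace ℂ (G →ᵇ ℂ) := toWeakSpace ℂ (G →ᵇ ℂ) (ind (trE E x))

/-- the dirac map into the weak space -/
noncomputable def psiD (g : G) : WeakSpace ℂ (G →ᵇ ℂ) := toWeakSpace ℂ (G →ᵇ ℂ) (dirac g)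

theorem image_leftOrbit_subset :
    toWeakSpace ℂ (G →ᵇ ℂ) '' leftOrbit (ind E) ⊆ Set.range (phiE E) := by
  rintro w ⟨g, ⟨x, rfl⟩, rfl⟩
  exact ⟨x⁻¹, by rw [phiE, ← biTranslate_ind]⟩

variable {E}
variable (hE1 : E.Infinite)
variable (hE2 : ∀ x x' : G, x ≠ x' → (trE E x ∩ trE E x').Finite)
variable (hE3 : ∀ t t' : G, t ≠ t' → {x : G | t ∈ trE E x ∧ t' ∈ trE E x}.Finite)

include hE1 hE2 in
theorem phiE_injective : Function.Injective (phiE E) := by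
  intro x x' h
  by_contra hne
  have h2 : ind (trE E x) = ind (trE E x') := (toWeakSpace ℂ (G →ᵇ ℂ)).injective h
  have h3 : trE E x = trE E x' := by
    by_contra h4
    exact ind_injective_ne h4 h2
  have h5 : (trE E x).Infinite := Set.Infinite.image
    (Set.injOn_of_injective (mul_right_injective x)) hE1
  apply h5
  have := hE2 x x' hne
  rwa [← h3, Set.inter_self] at this

include hE2 in
/-- T1: the singular part tends to zero along any nonprincipal ultrafilter -/
theorem sing_large_finite (μ : (G →ᵇ ℂ) →L[ℂ] ℂ) {ε : ℝ} (hε : 0 < ε) :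
    {x : G | ε ≤ ‖sing μ (ind (trE E x))‖}.Finite := by
  classical
  by_contra hinf
  rw [← Set.not_infinite, not_not] at hinf
  obtain ⟨N, hN⟩ := exists_nat_gt (‖sing μ‖ / ε)
  obtain ⟨X, hXsub, hXcard⟩ := hinf.exists_subset_card_eq N
  set s : G → ℂ := fun x => sing μ (ind (trE E x)) with hs
  have hsX : ∀ x ∈ X, ε ≤ ‖s x‖ := fun x hx => hXsub hx
  set A : G → Set G := fun x => trE E x \ ⋃ x' ∈ X.erase x, trE E x' with hA
  have hAsub : ∀ x, A x ⊆ trE E x := fun x => Set.diff_subset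
  have hdiff : ∀ x ∈ X, (trE E x \ A x).Finite := by
    intro x hx
    refine Set.Finite.subset (Set.Finite.biUnion (X.erase x).finite_toSet
      (fun x' hx' => hE2 x x' (fun hc => (Finset.mem_erase.mp hx').1 hc.symm))) ?_
    intro t ht
    obtain ⟨ht1, ht2⟩ := ht
    have hmem : t ∈ ⋃ x' ∈ X.erase x, trE E x' := by
      by_contra hc
      exact ht2 ⟨ht1, hc⟩
    rw [Set.mem_iUnion₂] at hmem
    obtain ⟨x', hx', htx'⟩ := hmem
    exact Set.mem_biUnion hx' ⟨ht1, htx'⟩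
  have hsingeq : ∀ x ∈ X, sing μ (ind (A x)) = s x := by
    intro x hx
    rw [hs]
    exact (sing_ind_congr μ (hAsub x) (hdiff x hx)).symm
  have hdisj : ∀ x ∈ X, ∀ x' ∈ X, x ≠ x' → A x ∩ A x' = ∅ := by
    intro x hx x' hx' hne
    ext t
    simp only [Set.mem_inter_iff, Set.mem_empty_iff_false, iff_false, not_and]
    intro ht ht'
    have : t ∉ ⋃ y ∈ X.erase x, trE E y := ht.2
    apply this
    exact Set.mem_biUnion (Finset.mem_erase.mpr ⟨fun hc => hne hc.symm, hx'⟩)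
      (hAsub x' ht')
  set c : G → ℂ := fun x => if s x = 0 then 1 else (‖s x‖ : ℂ) / s x with hcdef
  have hc1 : ∀ x, ‖c x‖ ≤ 1 := by
    intro x
    rw [hcdef]
    dsimp only
    split
    · simp
    · rename_i hne
      rw [norm_div, Complex.norm_real, norm_norm, div_self]
      · simpa using hne
  set h : G →ᵇ ℂ := ∑ x ∈ X, c x • ind (A x) with hh
  have hnorm : ‖h‖ ≤ 1 := norm_sum_ind_le X A c hdisj (fun i _ => hc1 i)
  have hμh : sing μ h = ((∑ x ∈ X, ‖s x‖ : ℝ) : ℂ) := by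
    rw [hh, map_sum]
    push_cast
    refine Finset.sum_congr rfl (fun x hx => ?_)
    rw [ContinuousLinearMap.map_smul, smul_eq_mul, hsingeq x hx, hcdef]
    dsimp only
    split
    · rename_i h0; simp [h0]
    · rename_i hne; rw [div_mul_cancel₀]; exact hne
  have hlow : (N : ℝ) * ε ≤ ∑ x ∈ X, ‖s x‖ := by
    calc (N : ℝ) * ε = ∑ _x ∈ X, ε := by rw [Finset.sum_const, hXcard, nsmul_eq_mul]
      _ ≤ ∑ x ∈ X, ‖s x‖ := Finset.sum_le_sum hsX
  have hup : ‖sing μ h‖ ≤ ‖sing μ‖ := by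
    calc ‖sing μ h‖ ≤ ‖sing μ‖ * ‖h‖ := (sing μ).le_opNorm h
      _ ≤ ‖sing μ‖ * 1 := mul_le_mul_of_nonneg_left hnorm (norm_nonneg _)
      _ = ‖sing μ‖ := mul_one _
  rw [hμh, Complex.norm_real] at hup
  have hsum_nonneg : (0 : ℝ) ≤ ∑ x ∈ X, ‖s x‖ := Finset.sum_nonneg (fun x _ => norm_nonneg _)
  rw [Real.norm_eq_abs, abs_of_nonneg hsum_nonneg] at hup
  have : ‖sing μ‖ < (N : ℝ) * ε := (div_lt_iff₀ hε).mp hN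
  linarith

/-- T2 core: convergence of the ℓ¹ parts given eventual pointwise behaviour -/
theorem tendsto_wtCLM_core (μ : (G →ᵇ ℂ) →L[ℂ] ℂ) (U : Ultrafilter G)
    (d : G →ᵇ ℂ) (hd1 : ‖d‖ ≤ 1)
    (hd : ∀ g : G, ∀ᶠ x in (U : Filter G), ind (trE E x) g = d g) :
    Filter.Tendsto (fun x => wtCLM μ (ind (trE E x))) (U : Filter G) (𝓝 (wtCLM μ d)) := by
  rw [Metric.tendsto_nhds]
  intro δ hδ
  -- choose a finset with small tail
  have htail := tendsto_tsum_compl_atTop_zero (fun g : G => ‖wt μ g‖)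
  rw [Metric.tendsto_nhds] at htail
  obtain ⟨F, hF⟩ := (htail (δ / 3) (by linarith)).exists
  have htail' : ∑' g : {x : G // x ∉ F}, ‖wt μ g‖ < δ / 3 := by
    have := hF
    rw [Real.dist_eq, sub_zero] at this
    calc ∑' g : {x : G // x ∉ F}, ‖wt μ g‖
        ≤ |∑' g : {x : G // x ∉ F}, ‖wt μ g‖| := le_abs_self _
      _ < δ / 3 := this
  have happrox : ∀ f : G →ᵇ ℂ, ‖f‖ ≤ 1 →
      ‖wtCLM μ f - ∑ g ∈ F, wt μ g * f g‖ ≤ ∑' g : {x : G // x ∉ F}, ‖wt μ g‖ := by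
    intro f hf
    have hsum := Summable.sum_add_tsum_subtype_compl (wt_mul_summable μ f) F
    have : wtCLM μ f - ∑ g ∈ F, wt μ g * f g = ∑' g : {x : G // x ∉ F}, wt μ g * f g := by
      rw [wtCLM_apply, ← hsum]; ring
    rw [this]
    calc ‖∑' g : {x : G // x ∉ F}, wt μ g * f g‖
        ≤ ∑' g : {x : G // x ∉ F}, ‖wt μ g * f g‖ :=
          norm_tsum_le_tsum_norm ((wt_mul_norm_summable μ f).subtype _)
      _ ≤ ∑' g : {x : G // x ∉ F}, ‖wt μ g‖ := by
          refine Summable.tsum_le_tsum (fun g => ?_) ((wt_mul_norm_summable μ f).subtype _)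
            ((wt_summable μ).subtype _)
          rw [norm_mul]
          calc ‖wt μ g.1‖ * ‖f g.1‖ ≤ ‖wt μ g.1‖ * ‖f‖ :=
                mul_le_mul_of_nonneg_left (f.norm_coe_le_norm g.1) (norm_nonneg _)
            _ ≤ ‖wt μ g.1‖ * 1 := mul_le_mul_of_nonneg_left hf (norm_nonneg _)
            _ = ‖wt μ g.1‖ := mul_one _
  have hev : ∀ᶠ x in (U : Filter G), ∀ g ∈ F, ind (trE E x) g = d g := by
    rw [Filter.eventually_all_finset]
    intro g _
    exact hd g
  refine hev.mono (fun x hx => ?_)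
  rw [dist_eq_norm]
  have hsplit : wtCLM μ (ind (trE E x)) - wtCLM μ d =
      (wtCLM μ (ind (trE E x)) - ∑ g ∈ F, wt μ g * ind (trE E x) g) +
      (∑ g ∈ F, wt μ g * ind (trE E x) g - ∑ g ∈ F, wt μ g * d g) +
      (∑ g ∈ F, wt μ g * d g - wtCLM μ d) := by ring
  have hmid : ∑ g ∈ F, wt μ g * ind (trE E x) g = ∑ g ∈ F, wt μ g * d g :=
    Finset.sum_congr rfl (fun g hg => by rw [hx g hg])
  calc ‖wtCLM μ (ind (trE E x)) - wtCLM μ d‖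
      ≤ ‖wtCLM μ (ind (trE E x)) - ∑ g ∈ F, wt μ g * ind (trE E x) g‖ +
        ‖∑ g ∈ F, wt μ g * ind (trE E x) g - ∑ g ∈ F, wt μ g * d g‖ +
        ‖∑ g ∈ F, wt μ g * d g - wtCLM μ d‖ := by
        rw [hsplit]
        exact (norm_add_le _ _).trans (add_le_add (norm_add_le _ _) le_rfl)
    _ ≤ (δ / 3) + 0 + (δ / 3) := by
        refine add_le_add (add_le_add ?_ ?_) ?_
        · exact (happrox _ (norm_ind_le _)).trans htail'.le
        · rw [hmid, sub_self, norm_zero]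
        · rw [norm_sub_rev]
          exact (happrox d hd1).trans htail'.le
    _ < δ := by linarith

end WAPMain


section WAPMain2

variable {G : Type*} [Group G] [TopologicalSpace G] [DiscreteTopology G] [IsTopologicalGroup G]
variable {E : Set G}
variable (hE1 : E.Infinite)
variable (hE2 : ∀ x x' : G, x ≠ x' → (trE E x ∩ trE E x').Finite)
variable (hE3 : ∀ t t' : G, t ≠ t' → {x : G | t ∈ trE E x ∧ t' ∈ trE E x}.Finite)

include hE2 in
theorem tendsto_sing_zero (μ : (G →ᵇ ℂ) →L[ℂ] ℂ) (U : Ultrafilter G)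
    (hU : ∀ s : Set G, s.Finite → s ∉ U) :
    Filter.Tendsto (fun x => sing μ (ind (trE E x))) (U : Filter G) (𝓝 0) := by
  rw [Metric.tendsto_nhds]
  intro ε hε
  have hfin := sing_large_finite hE2 μ hε
  have hcompl : {x : G | ε ≤ ‖sing μ (ind (trE E x))‖}ᶜ ∈ U :=
    Ultrafilter.compl_mem_iff_notMem.mpr (hU _ hfin)
  filter_upwards [hcompl] with x hx
  rw [dist_zero_right]
  exact not_le.mp hx

theorem psiD_injective : Function.Injective (psiD (G := G)) := fun g g' h =>
  dirac_injective ((toWeakSpace ℂ (G →ᵇ ℂ)).injective h)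

include hE1 hE2 hE3 in
theorem isWAP_ind : IsWAP (ind E : G →ᵇ ℂ) := by
  classical
  set K : Set (WeakSpace ℂ (G →ᵇ ℂ)) :=
    (Set.range (phiE E) ∪ Set.range (psiD (G := G))) ∪ {0} with hK
  have hKcomp : IsCompact K := by
    rw [isCompact_iff_ultrafilter_le_nhds]
    intro 𝒰 h𝒰
    rw [Filter.le_principal_iff] at h𝒰
    rcases Ultrafilter.union_mem_iff.mp h𝒰 with hmem | hmem
    · rcases Ultrafilter.union_mem_iff.mp hmem with hphi | hpsi
      · -- concentrated on the orbit part
        set U := 𝒰.comap (phiE_injective hE1 hE2) hphi with hUdef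
        have hmap : Filter.map (phiE E) (U : Filter G) = (𝒰 : Filter _) := by
          rw [Ultrafilter.coe_comap]
          exact Filter.map_comap_of_mem hphi
        by_cases hpure : ∃ x₀ : G, (U : Filter G) = pure x₀
        · obtain ⟨x₀, hx₀⟩ := hpure
          refine ⟨phiE E x₀, Or.inl (Or.inl ⟨x₀, rfl⟩), ?_⟩
          rw [← hmap, hx₀, Filter.map_pure]
          exact pure_le_nhds _
        · have hU : ∀ s : Set G, s.Finite → s ∉ U := by
            intro s hs hmem'
            obtain ⟨x, _, hx⟩ := Ultrafilter.eq_pure_of_finite_mem hs hmem'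
            exact hpure ⟨x, by rw [hx, Ultrafilter.coe_pure]⟩
          have key : ∀ (L : G →ᵇ ℂ), ‖L‖ ≤ 1 →
              (∀ g : G, ∀ᶠ x in (U : Filter G), ind (trE E x) g = L g) →
              (∀ μ : (G →ᵇ ℂ) →L[ℂ] ℂ, sing μ L = 0) →
              Filter.Tendsto (phiE E) (U : Filter G)
                (𝓝 (toWeakSpace ℂ (G →ᵇ ℂ) L)) := by
            intro L hL1 hLev hLsing
            rw [weak_tendsto_iff]
            intro μ
            have hfun : ∀ x : G,
                μ ((toWeakSpace ℂ (G →ᵇ ℂ)).symm (phiE E x)) =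
                  sing μ (ind (trE E x)) + wtCLM μ (ind (trE E x)) := by
              intro x
              rw [phiE, LinearEquiv.symm_apply_apply, sing_apply]
              ring
            have htarget : μ ((toWeakSpace ℂ (G →ᵇ ℂ)).symm (toWeakSpace ℂ (G →ᵇ ℂ) L)) =
                0 + wtCLM μ L := by
              rw [LinearEquiv.symm_apply_apply, zero_add]
              have := hLsing μ
              rw [sing_apply] at this
              exact sub_eq_zero.mp this
            rw [funext hfun, htarget]
            exact Filter.Tendsto.add (tendsto_sing_zero hE2 μ U hU)
              (tendsto_wtCLM_core μ U L hL1 hLev)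
          by_cases ht : ∃ t : G, {x : G | t ∈ trE E x} ∈ U
          · obtain ⟨t, htU⟩ := ht
            refine ⟨psiD t, Or.inl (Or.inr ⟨t, rfl⟩), ?_⟩
            rw [← hmap]
            refine key (dirac t) (norm_ind_le _) ?_ (fun μ => sing_dirac μ t)
            intro g
            by_cases hgt : g = t
            · subst hgt
              filter_upwards [htU] with x hx
              rw [ind_apply_mem hx]
              exact (ind_apply_mem (show g ∈ Set.singleton g from rfl)).symm
            · have hgU : {x : G | g ∈ trE E x} ∉ U := by
                intro hg
                have hint : {x : G | t ∈ trE E x} ∩ {x : G | g ∈ trE E x} ∈ U :=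
                  Filter.inter_mem htU hg
                have hfin : ({x : G | t ∈ trE E x} ∩ {x : G | g ∈ trE E x}).Finite := by
                  have := hE3 t g (fun hc => hgt hc.symm)
                  refine this.subset ?_
                  intro x hx
                  exact ⟨hx.1, hx.2⟩
                exact hU _ hfin hint
              have hcompl : {x : G | g ∈ trE E x}ᶜ ∈ U :=
                Ultrafilter.compl_mem_iff_notMem.mpr hgU
              filter_upwards [hcompl] with x hx
              rw [ind_apply_not_mem (A := trE E x) hx]
              exact (ind_apply_not_mem (show g ∉ Set.singleton t from fun hc => hgt hc)).symm
          · push_neg at ht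
            refine ⟨0, Or.inr rfl, ?_⟩
            rw [← hmap]
            have h0 : (0 : WeakSpace ℂ (G →ᵇ ℂ)) = toWeakSpace ℂ (G →ᵇ ℂ) 0 := by
              rw [map_zero]
            rw [h0]
            refine key 0 (by simp) ?_ (fun μ => by rw [map_zero])
            intro g
            have hcompl : {x : G | g ∈ trE E x}ᶜ ∈ U :=
              Ultrafilter.compl_mem_iff_notMem.mpr (ht g)
            filter_upwards [hcompl] with x hx
            rw [ind_apply_not_mem (A := trE E x) hx]
            rfl
      · -- concentrated on the dirac part
        set U := 𝒰.comap (psiD_injective (G := G)) hpsi with hUdef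
        have hmap : Filter.map (psiD (G := G)) (U : Filter G) = (𝒰 : Filter _) := by
          rw [Ultrafilter.coe_comap]
          exact Filter.map_comap_of_mem hpsi
        by_cases hpure : ∃ g₀ : G, (U : Filter G) = pure g₀
        · obtain ⟨g₀, hg₀⟩ := hpure
          refine ⟨psiD g₀, Or.inl (Or.inr ⟨g₀, rfl⟩), ?_⟩
          rw [← hmap, hg₀, Filter.map_pure]
          exact pure_le_nhds _
        · have hU : ∀ s : Set G, s.Finite → s ∉ U := by
            intro s hs hmem'
            obtain ⟨x, _, hx⟩ := Ultrafilter.eq_pure_of_finite_mem hs hmem'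
            exact hpure ⟨x, by rw [hx, Ultrafilter.coe_pure]⟩
          refine ⟨0, Or.inr rfl, ?_⟩
          rw [← hmap]
          have h0 : (0 : WeakSpace ℂ (G →ᵇ ℂ)) = toWeakSpace ℂ (G →ᵇ ℂ) 0 := by
            rw [map_zero]
          rw [h0]
          refine (weak_tendsto_iff.mpr ?_ :
            Filter.Tendsto psiD (U : Filter G) (𝓝 (toWeakSpace ℂ (G →ᵇ ℂ) 0)))
          intro μ
          have hfun : ∀ g : G,
              μ ((toWeakSpace ℂ (G →ᵇ ℂ)).symm (psiD g)) = wt μ g := by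
            intro g
            rw [psiD, LinearEquiv.symm_apply_apply, wt]
          rw [funext hfun, LinearEquiv.symm_apply_apply, map_zero]
          rw [Metric.tendsto_nhds]
          intro ε hε
          have hcompl : {g : G | ε ≤ ‖wt μ g‖}ᶜ ∈ U :=
            Ultrafilter.compl_mem_iff_notMem.mpr (hU _ (wt_large_finite μ hε))
          filter_upwards [hcompl] with g hg
          rw [dist_zero_right]
          exact not_le.mp hg
    · -- concentrated at 0
      obtain ⟨x, hx0, hxpure⟩ := Ultrafilter.eq_pure_of_finite_mem (Set.finite_singleton 0) hmem
      refine ⟨0, Or.inr rfl, ?_⟩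
      have : x = 0 := hx0
      subst this
      rw [hxpure, Ultrafilter.coe_pure]
      exact pure_le_nhds _
  have hsub : toWeakSpace ℂ (G →ᵇ ℂ) '' leftOrbit (ind E) ⊆ K :=
    fun w hw => Or.inl (Or.inl (image_leftOrbit_subset E hw))
  exact hKcomp.of_isClosed_subset isClosed_closure (closure_minimal hsub hKcomp.isClosed)

end WAPMain2



open Filter

section GroupConstruction

variable {G : Type*} [Group G]

/-- centralizer of a single element has finite index in an FC group -/
theorem FC.centralizer_finiteIndex (hFC : ∀ x : G, {y : G | IsConj x y}.Finite) (x : G) :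
    (Subgroup.centralizer {x}).FiniteIndex := by
  set H := Subgroup.centralizer ({x} : Set G)
  haveI : Finite {y : G | IsConj x y} := (hFC x).to_subtype
  haveI : Finite (G ⧸ H) := by
    refine Finite.of_injective (fun q => (⟨q.out * x * q.out⁻¹, isConj_iff.mpr ⟨q.out, rfl⟩⟩ :
      {y : G | IsConj x y})) ?_
    intro q1 q2 h
    simp only [Subtype.mk_eq_mk] at h
    have : q1.out⁻¹ * q2.out ∈ H := by
      rw [Subgroup.mem_centralizer_iff]
      intro g hg
      rw [Set.mem_singleton_iff] at hg
      subst hg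
      have h3 : g * (q1.out⁻¹ * q2.out) = q1.out⁻¹ * q2.out * g := by
        have h2 := congrArg (fun w => q1.out⁻¹ * w * q2.out) h
        simpa [mul_assoc] using h2
      simpa [mul_assoc] using h3
    calc q1 = QuotientGroup.mk q1.out := (QuotientGroup.out_eq' q1).symm
      _ = QuotientGroup.mk q2.out := (QuotientGroup.eq).mpr this
      _ = q2 := QuotientGroup.out_eq' q2
  exact Subgroup.finiteIndex_of_finite_quotient

theorem FC.centralizer_finset_finiteIndex (hFC : ∀ x : G, {y : G | IsConj x y}.Finite)
    (S : Finset G) : (Subgroup.centralizer (S : Set G)).FiniteIndex := by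
  classical
  have : Subgroup.centralizer (S : Set G) = ⨅ x ∈ S, Subgroup.centralizer {x} := by
    ext g
    simp [Subgroup.mem_iInf, Subgroup.mem_centralizer_iff]
  rw [this]
  exact Subgroup.finiteIndex_iInf' _ (fun i _ => FC.centralizer_finiteIndex hFC i)

variable (hFC : ∀ x : G, {y : G | IsConj x y}.Finite)
variable (hInf : ¬ (Subgroup.center G).FiniteIndex)

include hInf in
theorem infinite_of_center_not_finiteIndex : Infinite G := by
  rw [← not_finite_iff_infinite]
  intro h
  exact hInf (@Subgroup.finiteIndex_of_finite G _ (Subgroup.center G) h)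

include hInf in
theorem infinite_coe_of_finiteIndex (C : Subgroup G) (hC : C.FiniteIndex) : Infinite C := by
  haveI := infinite_of_center_not_finiteIndex hInf
  haveI := hC
  rw [← not_finite_iff_infinite]
  intro h
  haveI : Finite (G ⧸ C) := Subgroup.finite_quotient_of_finiteIndex
  exact (not_finite_iff_infinite.mpr ‹Infinite G›)
    (Finite.of_equiv _ (Subgroup.groupEquivQuotientProdSubgroup (s := C)).symm)

include hFC hInf in
theorem exists_noncomm_pair (C : Subgroup G) (hC : C.FiniteIndex) :
    ∃ a ∈ C, ∃ b ∈ C, a * b ≠ b * a := by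
  by_contra hcon
  push_neg at hcon
  haveI := hC
  apply hInf
  classical
  set K := C ⊓ ⨅ q : G ⧸ C, Subgroup.centralizer {(q.out : G)} with hK
  have hKfi : K.FiniteIndex := by
    constructor
    refine Subgroup.index_inf_ne_zero hC.index_ne_zero ?_
    haveI : Finite (G ⧸ C) := Subgroup.finite_quotient_of_finiteIndex
    exact (Subgroup.finiteIndex_iInf
      (fun q : G ⧸ C => FC.centralizer_finiteIndex hFC q.out)).index_ne_zero
  have hle : K ≤ Subgroup.center G := by
    intro k hk
    rw [Subgroup.mem_inf] at hk
    rw [Subgroup.mem_center_iff]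
    intro g
    have hout : k * (QuotientGroup.mk g : G ⧸ C).out = (QuotientGroup.mk g : G ⧸ C).out * k := by
      have := hk.2
      rw [Subgroup.mem_iInf] at this
      have h2 := this (QuotientGroup.mk g)
      rw [Subgroup.mem_centralizer_iff] at h2
      exact (h2 _ rfl).symm
    set t := (QuotientGroup.mk g : G ⧸ C).out with htdef
    have hc : t⁻¹ * g ∈ C := by
      rw [← QuotientGroup.eq]
      exact QuotientGroup.out_eq' _
    have hcomm : k * (t⁻¹ * g) = (t⁻¹ * g) * k := hcon _ hk.1 _ hc
    calc g * k = t * (t⁻¹ * g) * k := by rw [mul_inv_cancel_left]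
      _ = t * (k * (t⁻¹ * g)) := by rw [mul_assoc, ← hcomm]
      _ = (t * k) * (t⁻¹ * g) := by rw [mul_assoc]
      _ = (k * t) * (t⁻¹ * g) := by rw [← hout]
      _ = k * g := by rw [mul_assoc, mul_inv_cancel_left]
  exact Subgroup.finiteIndex_of_le (H := K) hle

include hFC hInf in
/-- the key step: in the centralizer of any finite set one can find a noncommuting pair
with the first element avoiding any given finite set. -/
theorem exists_step (S : Finset G) (F : Set G) (hF : F.Finite) :
    ∃ z v : G, (∀ s ∈ S, s * z = z * s ∧ s * v = v * s) ∧ z * v ≠ v * z ∧ z ∉ F := by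
  classical
  set C := Subgroup.centralizer (S : Set G) with hCdef
  have hCfi : C.FiniteIndex := FC.centralizer_finset_finiteIndex hFC S
  haveI := infinite_coe_of_finiteIndex hInf C hCfi
  obtain ⟨a, ha, b, hb, hab⟩ := exists_noncomm_pair hFC hInf C hCfi
  set Scomm : Set G := {g | g ∈ C ∧ ∀ c ∈ C, g * c = c * g} with hScomm
  set T : Set G := {g | g ∈ C ∧ g ∉ Scomm} with hT
  have haT : a ∈ T := by
    refine ⟨ha, ?_⟩
    intro hmem
    exact hab (hmem.2 b hb)
  have hTinf : T.Infinite := by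
    intro hTfin
    have hSsub : Scomm ⊆ (fun g => a * g) ⁻¹' T := by
      intro s hs
      refine ⟨C.mul_mem ha hs.1, ?_⟩
      intro hmem
      apply haT.2
      have hsinv : s⁻¹ ∈ Scomm := by
        refine ⟨C.inv_mem hs.1, ?_⟩
        intro c hc
        have := hs.2 c hc
        calc s⁻¹ * c = s⁻¹ * c * s * s⁻¹ := by rw [mul_inv_cancel_right]
          _ = s⁻¹ * (s * c) * s⁻¹ := by rw [mul_assoc s⁻¹ c s, ← this]
          _ = c * s⁻¹ := by rw [← mul_assoc, inv_mul_cancel, one_mul]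
      refine ⟨ha, ?_⟩
      intro c hc
      have h1 := hmem.2 c hc
      have h2 := hsinv.2 c hc
      -- a = (a*s) * s⁻¹
      calc a * c = a * s * s⁻¹ * c := by rw [mul_inv_cancel_right]
        _ = a * s * (s⁻¹ * c) := by simp only [mul_assoc]
        _ = a * s * (c * s⁻¹) := by rw [h2]
        _ = (a * s * c) * s⁻¹ := by simp only [mul_assoc]
        _ = (c * (a * s)) * s⁻¹ := by rw [h1]
        _ = c * a := by simp [mul_assoc]
    have hSfin : Scomm.Finite := by
      refine Set.Finite.subset (Set.Finite.preimage ?_ hTfin) hSsub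
      exact Set.injOn_of_injective (mul_right_injective a)
    have hCfin : (C : Set G).Finite := by
      refine Set.Finite.subset (hSfin.union hTfin) ?_
      intro g hg
      by_cases hmem : g ∈ Scomm
      · exact Or.inl hmem
      · exact Or.inr ⟨hg, hmem⟩
    have : Finite C := hCfin.to_subtype
    exact (not_finite_iff_infinite.mpr ‹Infinite C›) this
  obtain ⟨z, hzT, hzF⟩ := (hTinf.diff hF).nonempty
  have hzC : z ∈ C := hzT.1
  have : ∃ c ∈ C, z * c ≠ c * z := by
    by_contra hcon
    push_neg at hcon
    exact hzT.2 ⟨hzC, hcon⟩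
  obtain ⟨v, hvC, hzv⟩ := this
  refine ⟨z, v, ?_, hzv, hzF⟩
  intro s hs
  constructor
  · exact (Subgroup.mem_centralizer_iff.mp hzC s (by exact_mod_cast hs))
  · exact (Subgroup.mem_centralizer_iff.mp hvC s (by exact_mod_cast hs))

end GroupConstruction
section ChainConstruction

variable {G : Type*} [Group G]
variable (hFC : ∀ x : G, {y : G | IsConj x y}.Finite)
variable (hInf : ¬ (Subgroup.center G).FiniteIndex)

/-- first components of a list of pairs, as a set -/
def fstSet (l : List (G × G)) : Set G := {g | ∃ p ∈ l, p.1 = g}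

theorem fstSet_finite (l : List (G × G)) : (fstSet l).Finite := by
  have : fstSet l = Prod.fst '' {p | p ∈ l} := by
    ext g; simp [fstSet, Set.mem_image]
  rw [this]
  exact (l.finite_toSet).image _

include hFC in
theorem avoid_finite (l : List (G × G)) :
    (((fun t : G × G × G => t.1 * t.2.1⁻¹ * t.2.2) ''
        (fstSet l ×ˢ fstSet l ×ˢ fstSet l)) ∪ ⋃ a ∈ fstSet l, {y | IsConj a y}).Finite := by
  refine Set.Finite.union ?_ ?_
  · exact (((fstSet_finite l).prod ((fstSet_finite l).prod (fstSet_finite l)))).image _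
  · exact Set.Finite.biUnion (fstSet_finite l) (fun a _ => hFC a)

/-- the elements appearing in the list of pairs -/
noncomputable def elems (l : List (G × G)) : Finset G :=
  letI := Classical.decEq G
  (l.map Prod.fst ++ l.map Prod.snd).toFinset

/-- the avoidance set -/
def avoidSet (l : List (G × G)) : Set G :=
  ((fun t : G × G × G => t.1 * t.2.1⁻¹ * t.2.2) ''
      (fstSet l ×ˢ fstSet l ×ˢ fstSet l)) ∪ ⋃ a ∈ fstSet l, {y | IsConj a y}

noncomputable def nextPair (l : List (G × G)) : G × G :=
  ⟨(exists_step hFC hInf (elems l) (avoidSet l) (avoid_finite hFC l)).choose,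
   (exists_step hFC hInf (elems l) (avoidSet l) (avoid_finite hFC l)).choose_spec.choose⟩

theorem nextPair_spec (l : List (G × G)) :
    (∀ s ∈ elems l, s * (nextPair hFC hInf l).1 = (nextPair hFC hInf l).1 * s ∧
        s * (nextPair hFC hInf l).2 = (nextPair hFC hInf l).2 * s) ∧
      (nextPair hFC hInf l).1 * (nextPair hFC hInf l).2 ≠
        (nextPair hFC hInf l).2 * (nextPair hFC hInf l).1 ∧
      (nextPair hFC hInf l).1 ∉ avoidSet l :=
  (exists_step hFC hInf (elems l) (avoidSet l) (avoid_finite hFC l)).choose_spec.choose_spec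

noncomputable def chain : ℕ → List (G × G)
  | 0 => []
  | n + 1 => chain n ++ [nextPair hFC hInf (chain n)]

noncomputable def zz (n : ℕ) : G := (nextPair hFC hInf (chain hFC hInf n)).1

noncomputable def vv (n : ℕ) : G := (nextPair hFC hInf (chain hFC hInf n)).2

theorem chain_eq (n : ℕ) :
    chain hFC hInf n = (List.range n).map (fun i => (zz hFC hInf i, vv hFC hInf i)) := by
  induction n with
  | zero => rfl
  | succ n ih =>
    rw [List.range_succ, List.map_append, ← ih]
    rfl

theorem mem_chain {i n : ℕ} (h : i < n) :
    (zz hFC hInf i, vv hFC hInf i) ∈ chain hFC hInf n := by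
  rw [chain_eq, List.mem_map]
  exact ⟨i, List.mem_range.mpr h, rfl⟩

theorem zz_mem_elems {i n : ℕ} (h : i < n) : zz hFC hInf i ∈ elems (chain hFC hInf n) := by
  letI := Classical.decEq G
  simp only [elems, List.mem_toFinset, List.mem_append, List.mem_map]
  exact Or.inl ⟨_, mem_chain hFC hInf h, rfl⟩

theorem vv_mem_elems {i n : ℕ} (h : i < n) : vv hFC hInf i ∈ elems (chain hFC hInf n) := by
  letI := Classical.decEq G
  simp only [elems, List.mem_toFinset, List.mem_append, List.mem_map]
  exact Or.inr ⟨_, mem_chain hFC hInf h, rfl⟩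

theorem zz_mem_fstSet {i n : ℕ} (h : i < n) : zz hFC hInf i ∈ fstSet (chain hFC hInf n) :=
  ⟨_, mem_chain hFC hInf h, rfl⟩

theorem comm_zz {i j : ℕ} (h : i < j) : Commute (zz hFC hInf i) (zz hFC hInf j) :=
  ((nextPair_spec hFC hInf (chain hFC hInf j)).1 _ (zz_mem_elems hFC hInf h)).1

theorem comm_zv {i j : ℕ} (h : i < j) : Commute (zz hFC hInf i) (vv hFC hInf j) :=
  ((nextPair_spec hFC hInf (chain hFC hInf j)).1 _ (zz_mem_elems hFC hInf h)).2

theorem comm_vz {i j : ℕ} (h : i < j) : Commute (vv hFC hInf i) (zz hFC hInf j) :=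
  ((nextPair_spec hFC hInf (chain hFC hInf j)).1 _ (vv_mem_elems hFC hInf h)).1

theorem comm_vv {i j : ℕ} (h : i < j) : Commute (vv hFC hInf i) (vv hFC hInf j) :=
  ((nextPair_spec hFC hInf (chain hFC hInf j)).1 _ (vv_mem_elems hFC hInf h)).2

theorem noncomm (j : ℕ) : ¬ Commute (zz hFC hInf j) (vv hFC hInf j) :=
  (nextPair_spec hFC hInf (chain hFC hInf j)).2.1

theorem commute_vz_of_ne {i m : ℕ} (h : i ≠ m) : Commute (vv hFC hInf i) (zz hFC hInf m) := by
  rcases lt_or_gt_of_ne h with h | h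
  · exact comm_vz hFC hInf h
  · exact (comm_zv hFC hInf h).symm

theorem commute_vv_of_ne {i m : ℕ} (h : i ≠ m) : Commute (vv hFC hInf i) (vv hFC hInf m) := by
  rcases lt_or_gt_of_ne h with h | h
  · exact comm_vv hFC hInf h
  · exact (comm_vv hFC hInf h).symm

theorem avoid_prod {a b c j : ℕ} (ha : a < j) (hb : b < j) (hc : c < j) :
    zz hFC hInf j ≠ zz hFC hInf a * (zz hFC hInf b)⁻¹ * zz hFC hInf c := by
  intro hEq
  apply (nextPair_spec hFC hInf (chain hFC hInf j)).2.2
  exact Or.inl ⟨⟨zz hFC hInf a, zz hFC hInf b, zz hFC hInf c⟩,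
    ⟨zz_mem_fstSet hFC hInf ha, zz_mem_fstSet hFC hInf hb, zz_mem_fstSet hFC hInf hc⟩, hEq.symm⟩

theorem avoid_conj {a j : ℕ} (ha : a < j) : ¬ IsConj (zz hFC hInf a) (zz hFC hInf j) := by
  intro hEq
  apply (nextPair_spec hFC hInf (chain hFC hInf j)).2.2
  refine Or.inr ?_
  exact Set.mem_biUnion (zz_mem_fstSet hFC hInf ha) hEq

theorem zz_injective : Function.Injective (zz hFC hInf) := by
  intro i j h
  by_contra hne
  rcases lt_or_gt_of_ne hne with hlt | hlt
  · exact avoid_conj hFC hInf hlt (h ▸ IsConj.refl _)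
  · exact avoid_conj hFC hInf hlt (h ▸ IsConj.refl _)

theorem sidonR (d : G) (hd : d ≠ 1) :
    {p : ℕ × ℕ | p.1 ≠ p.2 ∧ zz hFC hInf p.1 * (zz hFC hInf p.2)⁻¹ = d}.Finite := by
  set Z := zz hFC hInf
  set S := {p : ℕ × ℕ | p.1 ≠ p.2 ∧ Z p.1 * (Z p.2)⁻¹ = d} with hS
  rcases Set.eq_empty_or_nonempty S with h | ⟨⟨m₀, k₀⟩, hmk₀⟩
  · rw [h]; exact Set.finite_empty
  set M := max m₀ k₀
  have key : ∀ p ∈ S, p.1 ≤ M ∧ p.2 ≤ M := by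
    rintro ⟨m, k⟩ ⟨hne, hmk⟩
    obtain ⟨hne₀, hmk₀'⟩ := hmk₀
    by_contra hcon
    -- the max of (m, k) exceeds M
    have hMlt : M < max m k := by
      rcases not_and_or.mp hcon with h | h
      · exact lt_max_iff.mpr (Or.inl (lt_of_not_ge h))
      · exact lt_max_iff.mpr (Or.inr (lt_of_not_ge h))
    have hm₀ : m₀ ≤ M := le_max_left _ _
    have hk₀ : k₀ ≤ M := le_max_right _ _
    rcases le_or_gt k m with hkm | hkm
    · -- j = m, k < m
      have hkm' : k < m := lt_of_le_of_ne hkm (fun he => hne he.symm)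
      have hmax : max m k = m := max_eq_left hkm
      have hjm : M < m := hmax ▸ hMlt
      have : Z m = Z m₀ * (Z k₀)⁻¹ * Z k := by
        rw [mul_inv_eq_iff_eq_mul] at hmk
        rw [hmk, ← hmk₀']
      exact avoid_prod hFC hInf (lt_of_le_of_lt hm₀ hjm) (lt_of_le_of_lt hk₀ hjm) hkm' this
    · -- j = k, m < k
      have hmax : max m k = k := max_eq_right (le_of_lt hkm)
      have hjk : M < k := hmax ▸ hMlt
      have : Z k = Z k₀ * (Z m₀)⁻¹ * Z m := by
        rw [mul_inv_eq_iff_eq_mul] at hmk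
        have : Z k = d⁻¹ * Z m := by rw [hmk, inv_mul_cancel_left]
        rw [this, ← hmk₀']
        simp [mul_assoc]
      exact avoid_prod hFC hInf (lt_of_le_of_lt hk₀ hjk) (lt_of_le_of_lt hm₀ hjk) hkm this
  refine Set.Finite.subset ((Set.finite_Iic M).prod (Set.finite_Iic M)) ?_
  intro p hp
  exact ⟨(key p hp).1, (key p hp).2⟩

theorem sidonL (d : G) (hd : d ≠ 1) :
    {p : ℕ × ℕ | p.1 ≠ p.2 ∧ (zz hFC hInf p.1)⁻¹ * zz hFC hInf p.2 = d}.Finite := by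
  set Z := zz hFC hInf
  set S := {p : ℕ × ℕ | p.1 ≠ p.2 ∧ (Z p.1)⁻¹ * Z p.2 = d} with hS
  rcases Set.eq_empty_or_nonempty S with h | ⟨⟨m₀, k₀⟩, hmk₀⟩
  · rw [h]; exact Set.finite_empty
  set M := max m₀ k₀
  have key : ∀ p ∈ S, p.1 ≤ M ∧ p.2 ≤ M := by
    rintro ⟨m, k⟩ ⟨hne, hmk⟩
    obtain ⟨hne₀, hmk₀'⟩ := hmk₀
    by_contra hcon
    have hMlt : M < max m k := by
      rcases not_and_or.mp hcon with h | h
      · exact lt_max_iff.mpr (Or.inl (lt_of_not_ge h))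
      · exact lt_max_iff.mpr (Or.inr (lt_of_not_ge h))
    have hm₀ : m₀ ≤ M := le_max_left _ _
    have hk₀ : k₀ ≤ M := le_max_right _ _
    have hk_eq : Z k = Z m * d := by
      rw [inv_mul_eq_iff_eq_mul] at hmk
      exact hmk
    rcases le_or_gt k m with hkm | hkm
    · have hkm' : k < m := lt_of_le_of_ne hkm (fun he => hne he.symm)
      have hjm : M < m := (max_eq_left hkm) ▸ hMlt
      have : Z m = Z k * (Z k₀)⁻¹ * Z m₀ := by
        have h2 : Z m = Z k * d⁻¹ := by rw [hk_eq, mul_inv_cancel_right]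
        rw [h2, ← hmk₀']
        simp [mul_assoc]
      exact avoid_prod hFC hInf hkm' (lt_of_le_of_lt hk₀ hjm) (lt_of_le_of_lt hm₀ hjm) this
    · have hjk : M < k := (max_eq_right (le_of_lt hkm)) ▸ hMlt
      have : Z k = Z m * (Z m₀)⁻¹ * Z k₀ := by
        rw [hk_eq, ← hmk₀']
        simp [mul_assoc]
      exact avoid_prod hFC hInf hkm (lt_of_le_of_lt hm₀ hjk) (lt_of_le_of_lt hk₀ hjk) this
  refine Set.Finite.subset ((Set.finite_Iic M).prod (Set.finite_Iic M)) ?_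
  intro p hp
  exact ⟨(key p hp).1, (key p hp).2⟩

theorem conj_out (m j : ℕ) :
    vv hFC hInf m * zz hFC hInf m * (vv hFC hInf m)⁻¹ ≠ zz hFC hInf j := by
  intro hEq
  rcases eq_or_ne j m with rfl | hne
  · apply noncomm hFC hInf j
    have : vv hFC hInf j * zz hFC hInf j = zz hFC hInf j * vv hFC hInf j := by
      have := congrArg (· * vv hFC hInf j) hEq
      simpa [mul_assoc] using this
    exact this.symm
  · have hconj : IsConj (zz hFC hInf m) (zz hFC hInf j) := isConj_iff.mpr ⟨vv hFC hInf m, hEq⟩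
    rcases lt_or_gt_of_ne hne with hlt | hlt
    · exact avoid_conj hFC hInf hlt hconj.symm
    · exact avoid_conj hFC hInf hlt hconj

/-- the product `w n = v 0 * v 1 * ⋯ * v (n-1)` -/
noncomputable def ww (n : ℕ) : G := ((List.range n).map (vv hFC hInf)).prod

theorem ww_succ (n : ℕ) : ww hFC hInf (n + 1) = ww hFC hInf n * vv hFC hInf n := by
  rw [ww, List.range_succ, List.map_append]
  simp [ww]

theorem comm_ww {n : ℕ} {g : G} (h : ∀ i < n, Commute (vv hFC hInf i) g) :
    Commute (ww hFC hInf n) g := by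
  apply Commute.list_prod_left
  intro x hx
  rw [List.mem_map] at hx
  obtain ⟨i, hi, rfl⟩ := hx
  exact h i (List.mem_range.mp hi)

theorem conj_ww_of_le {m n : ℕ} (h : n ≤ m) :
    ww hFC hInf n * zz hFC hInf m * (ww hFC hInf n)⁻¹ = zz hFC hInf m := by
  have hc : Commute (ww hFC hInf n) (zz hFC hInf m) :=
    comm_ww hFC hInf (fun i hi => comm_vz hFC hInf (lt_of_lt_of_le hi h))
  rw [hc.eq, mul_inv_cancel_right]

theorem conj_ww_of_lt {m n : ℕ} (h : m < n) :
    ww hFC hInf n * zz hFC hInf m * (ww hFC hInf n)⁻¹ =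
      vv hFC hInf m * zz hFC hInf m * (vv hFC hInf m)⁻¹ := by
  induction n, h using Nat.le_induction with
  | base =>
    rw [ww_succ]
    have hcomm : Commute (ww hFC hInf m) (vv hFC hInf m * zz hFC hInf m * (vv hFC hInf m)⁻¹) := by
      apply comm_ww
      intro i hi
      exact ((commute_vv_of_ne hFC hInf (Nat.ne_of_lt hi)).mul_right
        (commute_vz_of_ne hFC hInf (Nat.ne_of_lt hi))).mul_right
        (commute_vv_of_ne hFC hInf (Nat.ne_of_lt hi)).inv_right
    calc ww hFC hInf m * vv hFC hInf m * zz hFC hInf m * (ww hFC hInf m * vv hFC hInf m)⁻¹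
        = ww hFC hInf m * (vv hFC hInf m * zz hFC hInf m * (vv hFC hInf m)⁻¹) *
          (ww hFC hInf m)⁻¹ := by
          rw [mul_inv_rev]; simp only [mul_assoc]
      _ = vv hFC hInf m * zz hFC hInf m * (vv hFC hInf m)⁻¹ := by
          rw [hcomm.eq, mul_inv_cancel_right]
  | succ n hn ih =>
    rw [ww_succ]
    have hcz : Commute (vv hFC hInf n) (zz hFC hInf m) :=
      commute_vz_of_ne hFC hInf (Nat.lt_of_succ_le hn).ne'
    calc ww hFC hInf n * vv hFC hInf n * zz hFC hInf m * (ww hFC hInf n * vv hFC hInf n)⁻¹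
        = ww hFC hInf n * (vv hFC hInf n * zz hFC hInf m * (vv hFC hInf n)⁻¹) *
          (ww hFC hInf n)⁻¹ := by
          rw [mul_inv_rev]; simp only [mul_assoc]
      _ = ww hFC hInf n * zz hFC hInf m * (ww hFC hInf n)⁻¹ := by
          rw [hcz.eq, mul_inv_cancel_right]
      _ = vv hFC hInf m * zz hFC hInf m * (vv hFC hInf m)⁻¹ := ih

end ChainConstruction


section NotWS

variable {G : Type*} [Group G] [TopologicalSpace G] [DiscreteTopology G] [IsTopologicalGroup G]
variable (hFC : ∀ x : G, {y : G | IsConj x y}.Finite)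
variable (hInf : ¬ (Subgroup.center G).FiniteIndex)

theorem pattern_value (n m : ℕ) :
    ind (Set.range (zz hFC hInf)) (ww hFC hInf n * zz hFC hInf m * (ww hFC hInf n)⁻¹) =
      if n ≤ m then 1 else 0 := by
  rcases le_or_gt n m with h | h
  · rw [conj_ww_of_le hFC hInf h, if_pos h]
    exact ind_apply_mem ⟨m, rfl⟩
  · rw [conj_ww_of_lt hFC hInf h, if_neg (not_le.mpr h)]
    refine ind_apply_not_mem ?_
    rintro ⟨j, hj⟩
    exact conj_out hFC hInf m j hj.symm

theorem not_isWS_ind : ¬ IsWS (ind (Set.range (zz hFC hInf)) : G →ᵇ ℂ) := by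
  intro hWS
  classical
  set Z := zz hFC hInf with hZ
  set E := Set.range Z with hE
  set f : G →ᵇ ℂ := ind E with hf
  set U : Ultrafilter ℕ := Filter.hyperfilter ℕ with hU
  have hUcof : ∀ s : Set ℕ, sᶜ.Finite → s ∈ U := by
    intro s hs
    exact Filter.hyperfilter_le_cofinite hs
  -- the limit functional along U of the evaluations at Z m
  have hlim : ∀ h : G →ᵇ ℂ, ∃ c : ℂ,
      Filter.Tendsto (fun m => h (Z m)) (U : Filter ℕ) (𝓝 c) := by
    intro h
    have hcomp : IsCompact (Metric.closedBall (0 : ℂ) ‖h‖) := isCompact_closedBall _ _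
    have hle : (Ultrafilter.map (fun m => h (Z m)) U : Filter ℂ) ≤
        Filter.principal (Metric.closedBall 0 ‖h‖) := by
      rw [Filter.le_principal_iff, Ultrafilter.coe_map, Filter.mem_map]
      refine Filter.univ_mem' (fun m => ?_)
      simpa [Metric.mem_closedBall, dist_zero_right] using h.norm_coe_le_norm (Z m)
    obtain ⟨c, _, hc⟩ := hcomp.ultrafilter_le_nhds _ hle
    exact ⟨c, hc⟩
  choose limv hlimv using hlim
  have hadd : ∀ h₁ h₂ : G →ᵇ ℂ, limv (h₁ + h₂) = limv h₁ + limv h₂ := by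
    intro h₁ h₂
    refine tendsto_nhds_unique (hlimv (h₁ + h₂)) ?_
    have := (hlimv h₁).add (hlimv h₂)
    simpa using this
  have hsmul : ∀ (r : ℂ) (h : G →ᵇ ℂ), limv (r • h) = r * limv h := by
    intro r h
    refine tendsto_nhds_unique (hlimv (r • h)) ?_
    have := (hlimv h).const_mul r
    simpa using this
  have hbound : ∀ h : G →ᵇ ℂ, ‖limv h‖ ≤ 1 * ‖h‖ := by
    intro h
    rw [one_mul]
    refine le_of_tendsto ((hlimv h).norm) ?_
    exact Filter.Eventually.of_forall (fun m => h.norm_coe_le_norm (Z m))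
  set μ : (G →ᵇ ℂ) →L[ℂ] ℂ :=
    LinearMap.mkContinuous
      { toFun := limv
        map_add' := hadd
        map_smul' := fun r h => by simpa using hsmul r h } 1 hbound with hμ
  have hμ_apply : ∀ h : G →ᵇ ℂ, μ h = limv h := fun h => rfl
  -- the elements of the double orbit
  set hseq : ℕ → (G →ᵇ ℂ) := fun n => biTranslate (ww hFC hInf n) ((ww hFC hInf n)⁻¹) f
    with hhseq
  have hval : ∀ n m, hseq n (Z m) = if n ≤ m then 1 else 0 := by
    intro n m
    rw [hhseq]
    dsimp only
    rw [biTranslate_apply]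
    exact pattern_value hFC hInf n m
  -- a cluster point of the sequence in the closure of the double orbit
  set Kc := closure ((toWeakSpace ℂ (G →ᵇ ℂ)) '' doubleOrbit f) with hKc
  have hmemKc : ∀ n, toWeakSpace ℂ (G →ᵇ ℂ) (hseq n) ∈ Kc := by
    intro n
    exact subset_closure ⟨hseq n, ⟨ww hFC hInf n, (ww hFC hInf n)⁻¹, rfl⟩, rfl⟩
  set U' : Ultrafilter ℕ := Filter.hyperfilter ℕ with hU'
  have hle : (Ultrafilter.map (fun n => toWeakSpace ℂ (G →ᵇ ℂ) (hseq n)) U' : Filter _) ≤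
      Filter.principal Kc := by
    rw [Filter.le_principal_iff, Ultrafilter.coe_map, Filter.mem_map]
    exact Filter.univ_mem' (fun n => hmemKc n)
  obtain ⟨gW, hgK, hgle⟩ := hWS.ultrafilter_le_nhds _ hle
  have htend : Filter.Tendsto (fun n => toWeakSpace ℂ (G →ᵇ ℂ) (hseq n)) (U' : Filter ℕ)
      (𝓝 gW) := hgle
  set g₀ : G →ᵇ ℂ := (toWeakSpace ℂ (G →ᵇ ℂ)).symm gW with hg₀
  have heval : ∀ ν : (G →ᵇ ℂ) →L[ℂ] ℂ,
      Filter.Tendsto (fun n => ν (hseq n)) (U' : Filter ℕ) (𝓝 (ν g₀)) := by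
    intro ν
    have := (weak_tendsto_iff).mp htend ν
    simpa [LinearEquiv.symm_apply_apply] using this
  -- evaluations of the limit vanish on the z's
  have hg₀z : ∀ m, g₀ (Z m) = 0 := by
    intro m
    have h1 := heval (BoundedContinuousFunction.evalCLM ℂ (Z m))
    have h2 : Filter.Tendsto (fun n => (BoundedContinuousFunction.evalCLM ℂ (Z m)) (hseq n))
        (U' : Filter ℕ) (𝓝 0) := by
      have hev : ∀ᶠ n in (U' : Filter ℕ), (BoundedContinuousFunction.evalCLM ℂ (Z m))
          (hseq n) = 0 := by
        have hmem : {n : ℕ | m < n} ∈ U' := by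
          refine hUcof _ ?_
          have : {n : ℕ | m < n}ᶜ ⊆ Set.Iic m := by
            intro n hn
            simpa using hn
          exact (Set.finite_Iic m).subset this
        filter_upwards [hmem] with n hn
        rw [BoundedContinuousFunction.evalCLM_apply, hval n m, if_neg (not_le.mpr hn)]
      exact Filter.Tendsto.congr' (Filter.EventuallyEq.symm hev) tendsto_const_nhds
    have := tendsto_nhds_unique h1 h2
    rw [BoundedContinuousFunction.evalCLM_apply] at this
    exact this
  -- μ of the limit is 1
  have hμh : ∀ n, μ (hseq n) = 1 := by
    intro n
    rw [hμ_apply]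
    refine tendsto_nhds_unique (hlimv (hseq n)) ?_
    have hev : ∀ᶠ m in (U : Filter ℕ), hseq n (Z m) = 1 := by
      have hmem : {m : ℕ | n ≤ m} ∈ U := by
        refine hUcof _ ?_
        have : {m : ℕ | n ≤ m}ᶜ ⊆ Set.Iic n := by
          intro m hm
          simp only [Set.mem_compl_iff, Set.mem_setOf_eq, not_le] at hm
          exact le_of_lt hm
        exact (Set.finite_Iic n).subset this
      filter_upwards [hmem] with m hm
      rw [hval n m, if_pos hm]
    exact Filter.Tendsto.congr' (Filter.EventuallyEq.symm hev) tendsto_const_nhds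
  have hμg1 : μ g₀ = 1 := by
    have h1 := heval μ
    have h2 : Filter.Tendsto (fun n => μ (hseq n)) (U' : Filter ℕ) (𝓝 1) := by
      refine Filter.Tendsto.congr (fun n => (hμh n).symm) tendsto_const_nhds
    exact (tendsto_nhds_unique h1 h2).symm ▸ rfl
  have hμg0 : μ g₀ = 0 := by
    rw [hμ_apply]
    refine tendsto_nhds_unique (hlimv g₀) ?_
    refine Filter.Tendsto.congr (fun m => (hg₀z m).symm) tendsto_const_nhds
  rw [hμg0] at hμg1
  exact zero_ne_one hμg1

end NotWS


section FinalAssembly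

variable {G : Type*} [Group G] [TopologicalSpace G] [DiscreteTopology G] [IsTopologicalGroup G]

theorem range_zz_E2 (hFC : ∀ x : G, {y : G | IsConj x y}.Finite)
    (hInf : ¬ (Subgroup.center G).FiniteIndex) :
    ∀ x x' : G, x ≠ x' →
      (trE (Set.range (zz hFC hInf)) x ∩ trE (Set.range (zz hFC hInf)) x').Finite := by
  intro x x' hne
  have hd : x⁻¹ * x' ≠ 1 := fun hc => hne (by rwa [inv_mul_eq_one] at hc)
  refine ((sidonR hFC hInf (x⁻¹ * x') hd).image (fun p => x * zz hFC hInf p.1)).subset ?_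
  rintro t ⟨ht1, ht2⟩
  obtain ⟨e, ⟨m, rfl⟩, rfl⟩ := ht1
  obtain ⟨e', ⟨k, rfl⟩, heq⟩ := ht2
  simp only at heq
  refine ⟨(m, k), ⟨show m ≠ k from ?_, show zz hFC hInf m * (zz hFC hInf k)⁻¹ = x⁻¹ * x'
    from ?_⟩, rfl⟩
  · intro hmk
    subst hmk
    exact hne (mul_right_cancel heq).symm
  · have h1 : zz hFC hInf m = x⁻¹ * x' * zz hFC hInf k := by
      rw [mul_assoc, heq, inv_mul_cancel_left]
    rw [h1, mul_inv_cancel_right]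

theorem range_zz_E3 (hFC : ∀ x : G, {y : G | IsConj x y}.Finite)
    (hInf : ¬ (Subgroup.center G).FiniteIndex) :
    ∀ t t' : G, t ≠ t' →
      {x : G | t ∈ trE (Set.range (zz hFC hInf)) x ∧
        t' ∈ trE (Set.range (zz hFC hInf)) x}.Finite := by
  intro t t' hne
  have hd : t⁻¹ * t' ≠ 1 := fun hc => hne (by rwa [inv_mul_eq_one] at hc)
  refine ((sidonL hFC hInf (t⁻¹ * t') hd).image (fun p => t * (zz hFC hInf p.1)⁻¹)).subset ?_
  rintro x ⟨ht1, ht2⟩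
  obtain ⟨e, ⟨m, rfl⟩, heq⟩ := ht1
  obtain ⟨e', ⟨k, rfl⟩, heq'⟩ := ht2
  simp only at heq heq'
  refine ⟨(m, k), ⟨show m ≠ k from ?_,
    show (zz hFC hInf m)⁻¹ * zz hFC hInf k = t⁻¹ * t' from ?_⟩,
    show t * (zz hFC hInf m)⁻¹ = x from ?_⟩
  · intro hmk
    subst hmk
    exact hne (heq.symm.trans heq')
  · rw [← heq, ← heq', mul_inv_rev, mul_assoc, inv_mul_cancel_left]
  · rw [← heq, mul_inv_cancel_right]

end FinalAssembly



/-- A discrete FC-group `G` (every conjugacy class is finite) is a WS-group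
if and only if its center has finite index. -/
theorem stmt15 {G : Type*} [Group G] [TopologicalSpace G] [DiscreteTopology G]
    [IsTopologicalGroup G]
    (hFC : ∀ x : G, {y : G | IsConj x y}.Finite) :
    ({f : G →ᵇ ℂ | IsWS f} = {f : G →ᵇ ℂ | IsWAP f}) ↔ (Subgroup.center G).FiniteIndex := by
  constructor
  · intro hEq
    by_contra hInf
    have hE1 : (Set.range (zz hFC hInf)).Infinite :=
      Set.infinite_range_of_injective (zz_injective hFC hInf)
    have hWAP : IsWAP (ind (Set.range (zz hFC hInf)) : G →ᵇ ℂ) :=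
      isWAP_ind hE1 (range_zz_E2 hFC hInf) (range_zz_E3 hFC hInf)
    have hmem : (ind (Set.range (zz hFC hInf)) : G →ᵇ ℂ) ∈ {f : G →ᵇ ℂ | IsWAP f} := hWAP
    rw [← hEq] at hmem
    exact not_isWS_ind hFC hInf hmem
  · intro hfi
    haveI := hfi
    ext f
    simp only [Set.mem_setOf_eq]
    exact ⟨fun h => isWAP_of_isWS h, fun h => isWS_of_isWAP_of_finiteIndex h⟩
end
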